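/- arXiv:1207.3519 — 5 statements merged into one kernel-verified Lean document; each statement's English description precedes it below -/
import Mathlib

section
/- Let g be a real-valued random variable on a probability space (Ω, P) with E[g] = 0 satisfying the tail bound P(|g| ≥ ρ) ≤ C₀·exp(−c₀·ρ^γ) for all ρ ≥ 0, with constants C₀, c₀ > 0 and exponent γ ∈ (1, 2]. Then there exists a constant c > 0 depending only on C₀, c₀ and γ such that for every t ∈ ℝ: E[exp(t·g)] ≤ exp(c·t²) if |t| ≤ 1, and E[exp(t·g)] ≤ exp(c·|t|^{γ/(γ−1)}) if |t| ≥ 1. -/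
/-!
Put `F = exp (c₀/2 |g|^γ)`. The layer-cake formula turns the tail bound into `E F ≤ 1 + C₀`.
Young's inequality `u |g| ≤ c₀/2 |g|^γ + K u^{γ/(γ-1)}` gives `e^{u|g|} ≤ e^{K u^{γ/(γ-1)}} F`,
which settles `|t| ≥ 1` at once. For `|t| ≤ 1`, the bound `e^x - 1 - x ≤ x² e^{|x|}` applied to
`x = t g`, together with `E g = 0`, gives `E e^{tg} ≤ 1 + O(t²)`.
-/

open MeasureTheory Real Set

lemma exp_sub_one_sub_le_sq_mul_exp_abs (x : ℝ) : exp x - 1 - x ≤ x ^ 2 * exp |x| := by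
  have h1 := add_one_le_exp (-x)
  have h2 : exp x * exp (-x) = 1 := by rw [← exp_add, add_neg_cancel, exp_zero]
  rcases le_or_gt 0 x with hx | hx
  · rw [abs_of_nonneg hx]
    nlinarith [exp_pos x, exp_pos (-x), mul_nonneg hx hx]
  · rw [abs_of_neg hx]
    nlinarith [exp_pos (-x), exp_pos x, add_one_le_exp x, one_le_exp (neg_nonneg.2 hx.le)]

lemma sq_le_two_mul_exp_abs (x : ℝ) : x ^ 2 ≤ 2 * exp |x| := by
  have h := pow_div_factorial_le_exp |x| (abs_nonneg x) 2
  rw [sq_abs] at h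
  norm_num [Nat.factorial] at h
  linarith

lemma exp_mul_le_one_add_mul_add_sq_mul_exp {t : ℝ} (ht : |t| ≤ 1) (x : ℝ) :
    exp (t * x) ≤ 1 + t * x + 2 * t ^ 2 * exp (2 * |x|) := by
  have habs : |t * x| ≤ |x| := by
    rw [abs_mul]; exact mul_le_of_le_one_left (abs_nonneg x) ht
  calc exp (t * x) = 1 + t * x + (exp (t * x) - 1 - t * x) := by ring
    _ ≤ 1 + t * x + t ^ 2 * x ^ 2 * exp |t * x| := by
        rw [← mul_pow]; gcongr; exact exp_sub_one_sub_le_sq_mul_exp_abs _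
    _ ≤ 1 + t * x + t ^ 2 * (2 * exp |x|) * exp |x| := by
        gcongr; exact sq_le_two_mul_exp_abs x
    _ = 1 + t * x + 2 * t ^ 2 * exp (2 * |x|) := by rw [two_mul |x|, exp_add]; ring

lemma exists_mul_le_mul_rpow_add_mul_rpow_conj {a p : ℝ} (ha : 0 < a) (hp : 1 < p) :
    ∃ K > 0, ∀ s u : ℝ, 0 ≤ s → 0 ≤ u → u * s ≤ a * s ^ p + K * u ^ (p / (p - 1)) := by
  set q := p / (p - 1)
  have hpq : p.HolderConjugate q := HolderConjugate.conjExponent hp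
  have hq : 0 < q := hpq.symm.pos
  set l := (a * p) ^ p⁻¹
  have hl : 0 < l := by positivity
  have hlp : l ^ p = a * p := rpow_inv_rpow (by positivity) hpq.ne_zero
  refine ⟨1 / (q * l ^ q), by positivity, fun s u hs hu => ?_⟩
  calc u * s = l * s * (u / l) := by field_simp
    _ ≤ (l * s) ^ p / p + (u / l) ^ q / q :=
        young_inequality_of_nonneg (by positivity) (by positivity) hpq
    _ = a * s ^ p + 1 / (q * l ^ q) * u ^ q := by
        rw [mul_rpow hl.le hs, div_rpow hu hl.le, hlp]
        field_simp [hpq.ne_zero]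

section TailBound

variable {Ω : Type*} [MeasurableSpace Ω] {μ : Measure Ω} {g : Ω → ℝ} {C₀ c₀ γ : ℝ}

def HasStretchedExpTail (μ : Measure Ω) (g : Ω → ℝ) (C₀ c₀ γ : ℝ) : Prop :=
  ∀ ρ : ℝ, 0 ≤ ρ → μ {ω | ρ ≤ |g ω|} ≤ ENNReal.ofReal (C₀ * exp (-c₀ * ρ ^ γ))

lemma measure_le_half_mul_rpow_abs_le (hc₀ : 0 < c₀) (hγ : 0 < γ)
    (htail : HasStretchedExpTail μ g C₀ c₀ γ)
    {t : ℝ} (ht : 0 ≤ t) :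
    μ {ω | t ≤ c₀ / 2 * |g ω| ^ γ} ≤ ENNReal.ofReal (C₀ * exp (-2 * t)) := by
  set ρ := (2 * t / c₀) ^ γ⁻¹
  have hργ : ρ ^ γ = 2 * t / c₀ := rpow_inv_rpow (by positivity) hγ.ne'
  have hsub : {ω | t ≤ c₀ / 2 * |g ω| ^ γ} ⊆ {ω | ρ ≤ |g ω|} := by
    intro ω (hω : t ≤ c₀ / 2 * |g ω| ^ γ)
    calc ρ ≤ (|g ω| ^ γ) ^ γ⁻¹ :=
          rpow_le_rpow (by positivity) (by rw [div_le_iff₀ hc₀]; linarith) (by positivity)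
      _ = |g ω| := rpow_rpow_inv (abs_nonneg _) hγ.ne'
  calc μ {ω | t ≤ c₀ / 2 * |g ω| ^ γ} ≤ μ {ω | ρ ≤ |g ω|} := measure_mono hsub
    _ ≤ ENNReal.ofReal (C₀ * exp (-c₀ * ρ ^ γ)) := htail ρ (by positivity)
    _ = ENNReal.ofReal (C₀ * exp (-2 * t)) := by rw [hργ]; field_simp

variable [IsProbabilityMeasure μ]

lemma lintegral_exp_half_mul_rpow_abs_le (hC₀ : 0 ≤ C₀) (hc₀ : 0 < c₀) (hγ : 0 < γ)
    (hg : AEMeasurable g μ)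
    (htail : HasStretchedExpTail μ g C₀ c₀ γ) :
    ∫⁻ ω, ENNReal.ofReal (exp (c₀ / 2 * |g ω| ^ γ)) ∂μ ≤ ENNReal.ofReal (1 + C₀) := by
  set Y : Ω → ℝ := fun ω => c₀ / 2 * |g ω| ^ γ
  have hY : ∀ ω, 0 ≤ Y ω := fun ω => by positivity
  have layer := lintegral_comp_eq_lintegral_meas_le_mul μ (ae_of_all _ hY) (by fun_prop)
    (fun _ _ => intervalIntegral.intervalIntegrable_exp) (ae_of_all _ fun t => (exp_pos t).le)
  simp only [integral_exp, exp_zero] at layer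
  have hsplit (ω : Ω) : ENNReal.ofReal (exp (Y ω)) = ENNReal.ofReal (exp (Y ω) - 1) + 1 := by
    rw [← ENNReal.ofReal_one,
      ← ENNReal.ofReal_add (by linarith [one_le_exp (hY ω)]) zero_le_one, sub_add_cancel]
  have hexp_neg : IntegrableOn (fun t => C₀ * exp (-t)) (Ioi 0) :=
    (integrableOn_exp_neg_Ioi 0).const_mul C₀
  calc ∫⁻ ω, ENNReal.ofReal (exp (Y ω)) ∂μ
      = (∫⁻ ω, ENNReal.ofReal (exp (Y ω) - 1) ∂μ) + 1 := by
        simp_rw [hsplit]; rw [lintegral_add_right _ measurable_const]; simp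
    _ = (∫⁻ t in Ioi 0, μ {ω | t ≤ Y ω} * ENNReal.ofReal (exp t)) + 1 := by rw [layer]
    _ ≤ (∫⁻ t in Ioi 0, ENNReal.ofReal (C₀ * exp (-t))) + 1 := by
        refine add_le_add_left
          (setLIntegral_mono' measurableSet_Ioi fun t (ht : (0 : ℝ) < t) => ?_) 1
        calc μ {ω | t ≤ Y ω} * ENNReal.ofReal (exp t)
            ≤ ENNReal.ofReal (C₀ * exp (-2 * t)) * ENNReal.ofReal (exp t) := by
              gcongr; exact measure_le_half_mul_rpow_abs_le hc₀ hγ htail (le_of_lt ht)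
          _ = ENNReal.ofReal (C₀ * exp (-t)) := by
              rw [← ENNReal.ofReal_mul (by positivity), mul_assoc, ← exp_add]; ring_nf
    _ = ENNReal.ofReal (1 + C₀) := by
        rw [← ofReal_integral_eq_lintegral_ofReal hexp_neg (ae_of_all _ fun t => by positivity),
          integral_const_mul, integral_exp_neg_Ioi_zero, mul_one, ← ENNReal.ofReal_one,
          ← ENNReal.ofReal_add hC₀ zero_le_one, add_comm]

lemma integrable_exp_half_mul_rpow_abs (hC₀ : 0 ≤ C₀) (hc₀ : 0 < c₀) (hγ : 0 < γ)
    (hg : AEMeasurable g μ)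
    (htail : HasStretchedExpTail μ g C₀ c₀ γ) :
    Integrable (fun ω => exp (c₀ / 2 * |g ω| ^ γ)) μ :=
  (lintegral_ofReal_ne_top_iff_integrable (by fun_prop : AEMeasurable _ μ).aestronglyMeasurable
    (ae_of_all _ fun _ => (exp_pos _).le)).1
    (ne_top_of_le_ne_top ENNReal.ofReal_ne_top
      (lintegral_exp_half_mul_rpow_abs_le hC₀ hc₀ hγ hg htail))

lemma integral_exp_half_mul_rpow_abs_le (hC₀ : 0 ≤ C₀) (hc₀ : 0 < c₀) (hγ : 0 < γ)
    (hg : AEMeasurable g μ)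
    (htail : HasStretchedExpTail μ g C₀ c₀ γ) :
    ∫ ω, exp (c₀ / 2 * |g ω| ^ γ) ∂μ ≤ 1 + C₀ := by
  rw [integral_eq_lintegral_of_nonneg_ae (ae_of_all _ fun _ => (exp_pos _).le)
    (by fun_prop : AEMeasurable _ μ).aestronglyMeasurable]
  exact ENNReal.toReal_le_of_le_ofReal (by positivity)
    (lintegral_exp_half_mul_rpow_abs_le hC₀ hc₀ hγ hg htail)

end TailBound

section Domination

variable {Ω : Type*} [MeasurableSpace Ω] {μ : Measure Ω} {g F : Ω → ℝ} {A t : ℝ}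

lemma integral_exp_mul_le_mul_integral (hF : Integrable F μ)
    (hdom : ∀ ω, exp (|t| * |g ω|) ≤ A * F ω) :
    ∫ ω, exp (t * g ω) ∂μ ≤ A * ∫ ω, F ω ∂μ := by
  rw [← integral_const_mul]
  refine integral_mono_of_nonneg (ae_of_all _ fun _ => (exp_pos _).le) (hF.const_mul A)
    (ae_of_all _ fun ω => (exp_le_exp.2 ?_).trans (hdom ω))
  exact (le_abs_self _).trans (abs_mul t (g ω)).le

lemma integral_exp_mul_le_one_add_sq_mul_integral [IsProbabilityMeasure μ]
    (hg : Integrable g μ) (hmean : ∫ ω, g ω ∂μ = 0) (hF : Integrable F μ) (ht : |t| ≤ 1)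
    (hdom : ∀ ω, exp (2 * |g ω|) ≤ A * F ω) :
    ∫ ω, exp (t * g ω) ∂μ ≤ 1 + 2 * A * t ^ 2 * ∫ ω, F ω ∂μ := by
  have hlin : Integrable (fun ω => 1 + t * g ω) μ := (integrable_const 1).add (hg.const_mul t)
  have hquad : Integrable (fun ω => 2 * A * t ^ 2 * F ω) μ := hF.const_mul _
  have hpointwise (ω : Ω) : exp (t * g ω) ≤ 1 + t * g ω + 2 * A * t ^ 2 * F ω :=
    calc exp (t * g ω) ≤ 1 + t * g ω + 2 * t ^ 2 * exp (2 * |g ω|) :=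
          exp_mul_le_one_add_mul_add_sq_mul_exp ht (g ω)
      _ ≤ 1 + t * g ω + 2 * t ^ 2 * (A * F ω) := by gcongr; exact hdom ω
      _ = 1 + t * g ω + 2 * A * t ^ 2 * F ω := by ring
  calc ∫ ω, exp (t * g ω) ∂μ ≤ ∫ ω, (1 + t * g ω + 2 * A * t ^ 2 * F ω) ∂μ :=
        integral_mono_of_nonneg (ae_of_all _ fun _ => (exp_pos _).le) (hlin.add hquad)
          (ae_of_all _ hpointwise)
    _ = 1 + 2 * A * t ^ 2 * ∫ ω, F ω ∂μ := by
        rw [integral_add hlin hquad, integral_add (integrable_const 1) (hg.const_mul t),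
          integral_const_mul, integral_const_mul, hmean]
        simp

end Domination

theorem stmt_8_general (C₀ c₀ γ : ℝ) (hC₀ : 0 < C₀) (hc₀ : 0 < c₀) (hγ1 : 1 < γ) :
    ∃ c : ℝ, 0 < c ∧
      ∀ (Ω : Type) (_ : MeasurableSpace Ω) (μ : Measure Ω), IsProbabilityMeasure μ →
        ∀ g : Ω → ℝ, Measurable g → Integrable g μ → (∫ ω, g ω ∂μ) = 0 →
          (∀ ρ : ℝ, 0 ≤ ρ →
            μ {ω | ρ ≤ |g ω|} ≤ ENNReal.ofReal (C₀ * Real.exp (-c₀ * ρ ^ γ))) →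
          ∀ t : ℝ,
            (|t| ≤ 1 → ∫ ω, Real.exp (t * g ω) ∂μ ≤ Real.exp (c * t ^ 2)) ∧
            (1 ≤ |t| →
              ∫ ω, Real.exp (t * g ω) ∂μ ≤ Real.exp (c * |t| ^ (γ / (γ - 1)))) := by
  obtain ⟨K, hK, young⟩ := exists_mul_le_mul_rpow_add_mul_rpow_conj (half_pos hc₀) hγ1
  set q := γ / (γ - 1)
  have hlog : 0 ≤ log (1 + C₀) := log_nonneg (by linarith)
  set c := 2 * exp (K * 2 ^ q) * (1 + C₀) + K + log (1 + C₀) with hc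
  refine ⟨c, by positivity, ?_⟩
  intro Ω _ μ _ g hgm hgint hmean htail t
  set F := fun ω => exp (c₀ / 2 * |g ω| ^ γ)
  have hFint : Integrable F μ :=
    integrable_exp_half_mul_rpow_abs hC₀.le hc₀ (by linarith) hgm.aemeasurable htail
  have hFle : ∫ ω, F ω ∂μ ≤ 1 + C₀ :=
    integral_exp_half_mul_rpow_abs_le hC₀.le hc₀ (by linarith) hgm.aemeasurable htail
  have hdom : ∀ u, 0 ≤ u → ∀ ω, exp (u * |g ω|) ≤ exp (K * u ^ q) * F ω := fun u hu ω => by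
    rw [← exp_add]; gcongr; linarith [young |g ω| u (abs_nonneg _) hu]
  constructor
  · intro ht
    calc ∫ ω, exp (t * g ω) ∂μ ≤ 1 + 2 * exp (K * 2 ^ q) * t ^ 2 * ∫ ω, F ω ∂μ :=
          integral_exp_mul_le_one_add_sq_mul_integral hgint hmean hFint ht (hdom 2 zero_le_two)
      _ ≤ 1 + 2 * exp (K * 2 ^ q) * t ^ 2 * (1 + C₀) := by gcongr
      _ ≤ 1 + c * t ^ 2 := by
          rw [hc]; nlinarith [mul_nonneg (add_nonneg hK.le hlog) (sq_nonneg t)]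
      _ ≤ exp (c * t ^ 2) := by linarith [add_one_le_exp (c * t ^ 2)]
  · intro ht
    have htq : 1 ≤ |t| ^ q := one_le_rpow ht (div_pos (by linarith) (by linarith)).le
    calc ∫ ω, exp (t * g ω) ∂μ ≤ exp (K * |t| ^ q) * ∫ ω, F ω ∂μ :=
          integral_exp_mul_le_mul_integral hFint (hdom |t| (abs_nonneg t))
      _ ≤ exp (K * |t| ^ q) * (1 + C₀) := by gcongr
      _ = exp (K * |t| ^ q + log (1 + C₀)) := by rw [exp_add, exp_log (by linarith)]
      _ ≤ exp (c * |t| ^ q) := by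
          gcongr
          nlinarith [mul_le_mul_of_nonneg_left htq hlog,
            mul_nonneg (by positivity : 0 ≤ 2 * exp (K * 2 ^ q) * (1 + C₀))
              (zero_le_one.trans htq)]

/-- For a centered random variable with a stretched-exponential tail bound of exponent
`γ ∈ (1,2]`, one has `E[exp(tg)] ≤ exp(c t²)` for `|t| ≤ 1` and
`E[exp(tg)] ≤ exp(c |t|^{γ/(γ-1)})` for `|t| ≥ 1`. -/
theorem stmt_8 (C₀ c₀ γ : ℝ) (hC₀ : 0 < C₀) (hc₀ : 0 < c₀) (hγ1 : 1 < γ) (hγ2 : γ ≤ 2) :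
    ∃ c : ℝ, 0 < c ∧
      ∀ (Ω : Type) (_ : MeasurableSpace Ω) (μ : Measure Ω), IsProbabilityMeasure μ →
        ∀ g : Ω → ℝ, Measurable g → Integrable g μ → (∫ ω, g ω ∂μ) = 0 →
          (∀ ρ : ℝ, 0 ≤ ρ →
            μ {ω | ρ ≤ |g ω|} ≤ ENNReal.ofReal (C₀ * Real.exp (-c₀ * ρ ^ γ))) →
          ∀ t : ℝ,
            (|t| ≤ 1 → ∫ ω, Real.exp (t * g ω) ∂μ ≤ Real.exp (c * t ^ 2)) ∧
            (1 ≤ |t| →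
              ∫ ω, Real.exp (t * g ω) ∂μ ≤ Real.exp (c * |t| ^ (γ / (γ - 1)))) :=
  stmt_8_general C₀ c₀ γ hC₀ hc₀ hγ1
end

section
/- Let (g_n)_{n ∈ ℕ} be a sequence of independent real-valued random variables on a probability space (Ω, P), each with E[g_n] = 0 and each satisfying the tail bound P(|g_n| ≥ ρ) ≤ C₀·exp(−c₀·ρ^γ) for all ρ ≥ 0, with common constants C₀, c₀ > 0 and exponent γ ∈ (1, 2]. Then there exist constants C, c > 0 depending only on C₀, c₀ and γ such that for every finitely supported sequence (c_n) of real numbers, not all zero, and every ρ ≥ 0: P( |Σ_n c_n·g_n| ≥ ρ ) ≤ C·exp( −c·(ρ/‖c‖_{ℓ²})^γ ), where ‖c‖_{ℓ²} = (Σ_n c_n²)^{1/2}. -/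
open MeasureTheory ProbabilityTheory

open Real Set
open scoped ENNReal

/-!
Integrating the tail bound (layer-cake formula) gives `E exp((c₀/2)|g|^γ) ≤ 1 + C₀`. Together
with Young's inequality `|s| x ≤ A |s|^γ' + (c₀/4) x^γ`, where `γ' ≥ 2` is the conjugate
exponent, this bounds the moment generating function of each centered `gₙ` by
`exp (K (s² + |s|^γ'))`: for `|s| ≤ 1` through `eᵘ ≤ 1 + u + u² e^|u|` and `E gₙ = 0`, for
`|s| ≥ 1` directly. By independence, and since `‖c‖_{γ'} ≤ ‖c‖₂`, the sum `S = ∑ cₙ gₙ` satisfies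
the same bound at scale `σ = ‖c‖₂`. For `x = ρ/σ ≥ 1`, Chernoff's bound at `tσ = ε x^(γ-1)`
(both tails) gives `P(|S| ≥ ρ) ≤ 2 exp(-(ε/2) x^γ)` as soon as `ε ≤ 1` and `4Kε ≤ 1`; for
`x < 1` the constant `2 exp(ε/2)` makes the bound trivial.
-/

theorem Real.exp_le_one_add_add_sq_mul_exp_abs (u : ℝ) : exp u ≤ 1 + u + u ^ 2 * exp |u| := by
  have hinv : exp u * exp (-u) = 1 := by rw [← exp_add, add_neg_cancel, exp_zero]
  have hmul : exp u * (1 - u) ≤ 1 := by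
    nlinarith [mul_le_mul_of_nonneg_left (add_one_le_exp (-u)) (exp_nonneg u)]
  rcases le_or_gt 0 u with hu | hu
  · rw [abs_of_nonneg hu]
    nlinarith [mul_le_mul_of_nonneg_left hmul hu]
  · have : 1 ≤ exp |u| := one_le_exp (abs_nonneg u)
    nlinarith [exp_pos u, mul_le_mul_of_nonneg_left this (sq_nonneg u)]

theorem Real.sq_le_mul_exp_mul_rpow {β γ x : ℝ} (hβ : 0 < β) (hγ : 1 ≤ γ) (hx : 0 ≤ x) :
    x ^ 2 ≤ (1 + 2 / β ^ 2) * exp (β * x ^ γ) := by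
  have hexp : 1 ≤ exp (β * x ^ γ) := one_le_exp (by positivity)
  have hcoef : 0 ≤ 2 / β ^ 2 := by positivity
  rcases le_or_gt x 1 with hx1 | hx1
  · nlinarith [mul_le_mul_of_nonneg_left hexp hcoef]
  · have hxγ : x ≤ x ^ γ := by
      simpa using rpow_le_rpow_of_exponent_le hx1.le hγ
    have hfact : (β * x ^ γ) ^ 2 / 2 ≤ exp (β * x ^ γ) := by
      simpa using pow_div_factorial_le_exp (x := β * x ^ γ) (by positivity) 2
    have hβ2 : β ^ 2 * (2 / β ^ 2) = 2 := by field_simp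
    nlinarith [mul_le_mul hxγ hxγ hx (by linarith), exp_pos (β * x ^ γ)]

theorem Real.exists_abs_mul_le_rpow_add_rpow {p q c : ℝ} (hpq : p.HolderConjugate q) (hc : 0 < c) :
    ∃ A : ℝ, 0 < A ∧ ∀ s x : ℝ, 0 ≤ x → |s| * x ≤ A * |s| ^ q + c * x ^ p := by
  have hp := hpq.pos
  have hq := hpq.symm.pos
  set δ : ℝ := (p * c) ^ p⁻¹
  have hδ : 0 < δ := by positivity
  have hδp : δ ^ p = p * c := by rw [← rpow_mul (by positivity), inv_mul_cancel₀ hp.ne', rpow_one]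
  refine ⟨δ⁻¹ ^ q / q, by positivity, fun s x hx => ?_⟩
  have h := young_inequality_of_nonneg (div_nonneg (abs_nonneg s) hδ.le) (mul_nonneg hδ.le hx)
    hpq.symm
  rw [div_eq_mul_inv, mul_rpow (abs_nonneg s) (by positivity), mul_rpow hδ.le hx, hδp] at h
  calc |s| * x = |s| * δ⁻¹ * (δ * x) := by field_simp
    _ ≤ _ := h
    _ = δ⁻¹ ^ q / q * |s| ^ q + c * x ^ p := by field_simp

theorem Real.HolderConjugate.two_le_of_le_two {p q : ℝ} (hpq : p.HolderConjugate q) (hp : p ≤ 2) :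
    2 ≤ q := by
  nlinarith [hpq.mul_eq_add, hpq.lt]

theorem Finset.sum_abs_rpow_le_sqrt_sum_sq_rpow {ι : Type*} (s : Finset ι) (f : ι → ℝ) {p : ℝ}
    (hp : 2 ≤ p) : ∑ i ∈ s, |f i| ^ p ≤ √(∑ i ∈ s, f i ^ 2) ^ p := by
  set σ := √(∑ i ∈ s, f i ^ 2)
  have hσ2 : σ ^ 2 = ∑ i ∈ s, f i ^ 2 := sq_sqrt (sum_nonneg fun i _ => sq_nonneg _)
  have hterm : ∀ i ∈ s, |f i| ^ p ≤ f i ^ 2 * σ ^ (p - 2) := by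
    intro i hi
    have hfσ : |f i| ≤ σ := by
      rw [← sqrt_sq_eq_abs]
      exact sqrt_le_sqrt (single_le_sum (fun j _ => sq_nonneg (f j)) hi)
    calc |f i| ^ p = |f i| ^ (2 : ℝ) * |f i| ^ (p - 2) := by
          rw [← rpow_add_of_nonneg (abs_nonneg _) (by norm_num) (by linarith), add_sub_cancel]
      _ ≤ f i ^ 2 * σ ^ (p - 2) := by
          rw [rpow_two, sq_abs]
          gcongr
  calc ∑ i ∈ s, |f i| ^ p ≤ ∑ i ∈ s, f i ^ 2 * σ ^ (p - 2) := sum_le_sum hterm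
    _ = σ ^ (2 : ℝ) * σ ^ (p - 2) := by rw [← sum_mul, rpow_two, hσ2]
    _ = σ ^ p := by rw [← rpow_add_of_nonneg (sqrt_nonneg _) (by norm_num) (by linarith),
        add_sub_cancel]

theorem Real.exp_mul_le_of_young {A q c γ : ℝ}
    (hyoung : ∀ s x : ℝ, 0 ≤ x → |s| * x ≤ A * |s| ^ q + c * x ^ γ) (s x : ℝ) :
    exp (s * x) ≤ exp (A * |s| ^ q) * exp (c * |x| ^ γ) := by
  rw [← exp_add, exp_le_exp]
  calc s * x ≤ |s| * |x| := (le_abs_self _).trans (abs_mul s x).le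
    _ ≤ _ := hyoung s |x| (abs_nonneg _)

theorem Real.exp_mul_le_one_add_add_sq_mul_of_young {A q c γ : ℝ} (hc : 0 < c) (hγ : 1 ≤ γ)
    (hA : 0 ≤ A) (hq : 0 ≤ q) (hyoung : ∀ s x : ℝ, 0 ≤ x → |s| * x ≤ A * |s| ^ q + c * x ^ γ)
    {s : ℝ} (hs : |s| ≤ 1) (x : ℝ) :
    exp (s * x) ≤ 1 + s * x + s ^ 2 * ((1 + 2 / c ^ 2) * exp A * exp (2 * c * |x| ^ γ)) := by
  set W := exp (c * |x| ^ γ)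
  have hsq : x ^ 2 ≤ (1 + 2 / c ^ 2) * W := by
    simpa using sq_le_mul_exp_mul_rpow hc hγ (abs_nonneg x)
  have habs : exp |s * x| ≤ exp A * W := by
    calc exp |s * x| ≤ exp (A * |s| ^ q) * W := by
          simpa [abs_mul] using exp_mul_le_of_young hyoung |s| |x|
      _ ≤ exp A * W := by
          gcongr
          exact mul_le_of_le_one_right hA (rpow_le_one (abs_nonneg s) hs hq)
  have hWW : W * W = exp (2 * c * |x| ^ γ) := by rw [← exp_add]; ring_nf
  calc exp (s * x) ≤ 1 + s * x + (s * x) ^ 2 * exp |s * x| := exp_le_one_add_add_sq_mul_exp_abs _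
    _ ≤ 1 + s * x + s ^ 2 * ((1 + 2 / c ^ 2) * W * (exp A * W)) := by
        rw [mul_pow, mul_assoc]
        gcongr
    _ = _ := by rw [← hWW]; ring

def HasWeibullTail {Ω : Type*} [MeasurableSpace Ω] (X : Ω → ℝ) (μ : Measure Ω) (C₀ c₀ γ : ℝ) :
    Prop :=
  ∀ ρ : ℝ, 0 ≤ ρ → μ {ω | ρ ≤ |X ω|} ≤ ENNReal.ofReal (C₀ * exp (-c₀ * ρ ^ γ))

namespace HasWeibullTail

variable {Ω : Type*} [MeasurableSpace Ω] {μ : Measure Ω} {X : Ω → ℝ} {C₀ c₀ γ : ℝ}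

theorem measure_le_exp_le (hX : HasWeibullTail X μ C₀ c₀ γ) (hc₀ : 0 < c₀) (hγ : 0 < γ)
    {t : ℝ} (ht : 1 ≤ t) :
    μ {ω | t ≤ exp (c₀ / 2 * |X ω| ^ γ)} ≤ ENNReal.ofReal (C₀ * t ^ (-2 : ℝ)) := by
  have hlog : 0 ≤ log t := log_nonneg ht
  set ρ := (2 / c₀ * log t) ^ γ⁻¹
  have hργ : ρ ^ γ = 2 / c₀ * log t := by
    rw [← rpow_mul (by positivity), inv_mul_cancel₀ hγ.ne', rpow_one]
  have hsub : {ω | t ≤ exp (c₀ / 2 * |X ω| ^ γ)} ⊆ {ω | ρ ≤ |X ω|} := by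
    intro ω hω
    have hlog_le : log t ≤ c₀ / 2 * |X ω| ^ γ := (log_le_iff_le_exp (by linarith)).2 hω
    rw [mem_ofPred_eq, ← rpow_le_rpow_iff (by positivity) (abs_nonneg _) hγ, hργ]
    rw [div_mul_eq_mul_div, div_le_iff₀ hc₀]
    linarith
  have hexp : exp (-c₀ * ρ ^ γ) = t ^ (-2 : ℝ) := by
    rw [hργ, rpow_def_of_pos (by linarith)]
    congr 1
    field_simp
  calc μ {ω | t ≤ exp (c₀ / 2 * |X ω| ^ γ)} ≤ μ {ω | ρ ≤ |X ω|} := measure_mono hsub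
    _ ≤ _ := hX ρ (by positivity)
    _ = _ := by rw [hexp]

variable [IsProbabilityMeasure μ]

theorem lintegral_exp_le (hX : HasWeibullTail X μ C₀ c₀ γ)
    (hXm : AEMeasurable X μ) (hC₀ : 0 ≤ C₀) (hc₀ : 0 < c₀) (hγ : 0 < γ) :
    ∫⁻ ω, ENNReal.ofReal (exp (c₀ / 2 * |X ω| ^ γ)) ∂μ ≤ ENNReal.ofReal (1 + C₀) := by
  rw [lintegral_eq_lintegral_meas_le μ (ae_of_all _ fun ω => (exp_pos _).le) (by fun_prop),
    ← Ioc_union_Ioi_eq_Ioi zero_le_one, lintegral_union measurableSet_Ioi Ioc_disjoint_Ioi_same,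
    ENNReal.ofReal_add zero_le_one hC₀, ENNReal.ofReal_one]
  gcongr
  · calc ∫⁻ t in Ioc (0 : ℝ) 1, μ {ω | t ≤ exp (c₀ / 2 * |X ω| ^ γ)}
        ≤ ∫⁻ _ in Ioc (0 : ℝ) 1, 1 := setLIntegral_mono' measurableSet_Ioc fun _ _ => prob_le_one
      _ = 1 := by simp
  · have hint : IntegrableOn (fun t : ℝ => C₀ * t ^ (-2 : ℝ)) (Ioi 1) :=
      (integrableOn_Ioi_rpow_of_lt (by norm_num) one_pos).const_mul C₀
    calc ∫⁻ t in Ioi (1 : ℝ), μ {ω | t ≤ exp (c₀ / 2 * |X ω| ^ γ)}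
        ≤ ∫⁻ t in Ioi (1 : ℝ), ENNReal.ofReal (C₀ * t ^ (-2 : ℝ)) :=
          setLIntegral_mono' measurableSet_Ioi fun t ht => hX.measure_le_exp_le hc₀ hγ (le_of_lt ht)
      _ = ENNReal.ofReal (∫ t in Ioi (1 : ℝ), C₀ * t ^ (-2 : ℝ)) := by
          rw [ofReal_integral_eq_lintegral_ofReal hint]
          filter_upwards [ae_restrict_mem measurableSet_Ioi] with t ht
          have : (0 : ℝ) < t := one_pos.trans ht
          positivity
      _ = ENNReal.ofReal C₀ := by
          rw [integral_const_mul, integral_Ioi_rpow_of_lt (by norm_num) one_pos]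
          norm_num

theorem integrable_exp (hX : HasWeibullTail X μ C₀ c₀ γ)
    (hXm : AEMeasurable X μ) (hC₀ : 0 ≤ C₀) (hc₀ : 0 < c₀) (hγ : 0 < γ) :
    Integrable (fun ω => exp (c₀ / 2 * |X ω| ^ γ)) μ := by
  refine ⟨(by fun_prop : AEMeasurable (fun ω => exp (c₀ / 2 * |X ω| ^ γ)) μ).aestronglyMeasurable,
    ?_⟩
  rw [hasFiniteIntegral_iff_ofReal (ae_of_all _ fun ω => (exp_pos _).le)]
  exact (hX.lintegral_exp_le hXm hC₀ hc₀ hγ).trans_lt ENNReal.ofReal_lt_top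

theorem integral_exp_le (hX : HasWeibullTail X μ C₀ c₀ γ)
    (hXm : AEMeasurable X μ) (hC₀ : 0 ≤ C₀) (hc₀ : 0 < c₀) (hγ : 0 < γ) :
    ∫ ω, exp (c₀ / 2 * |X ω| ^ γ) ∂μ ≤ 1 + C₀ := by
  rw [integral_eq_lintegral_of_nonneg_ae (ae_of_all _ fun ω => (exp_pos _).le)
    (hX.integrable_exp hXm hC₀ hc₀ hγ).aestronglyMeasurable]
  exact ENNReal.toReal_le_of_le_ofReal (by linarith) (hX.lintegral_exp_le hXm hC₀ hc₀ hγ)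

theorem integrable_exp_mul (hX : HasWeibullTail X μ C₀ c₀ γ)
    (hXm : AEMeasurable X μ) (hC₀ : 0 ≤ C₀) (hc₀ : 0 < c₀) (hγ : 1 < γ) (s : ℝ) :
    Integrable (fun ω => exp (s * X ω)) μ := by
  obtain ⟨A, -, hyoung⟩ := exists_abs_mul_le_rpow_add_rpow (HolderConjugate.conjExponent hγ)
    (half_pos hc₀)
  refine ((hX.integrable_exp hXm hC₀ hc₀ (by linarith)).const_mul
    (exp (A * |s| ^ conjExponent γ))).mono' (by fun_prop) (ae_of_all _ fun ω => ?_)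
  rw [norm_eq_abs, abs_exp]
  exact exp_mul_le_of_young hyoung s (X ω)

variable {A q : ℝ}

theorem mgf_le_of_one_le_abs (hX : HasWeibullTail X μ C₀ c₀ γ) (hXm : AEMeasurable X μ)
    (hC₀ : 0 ≤ C₀) (hc₀ : 0 < c₀) (hγ : 0 < γ) (hq : 0 ≤ q)
    (hyoung : ∀ s x : ℝ, 0 ≤ x → |s| * x ≤ A * |s| ^ q + c₀ / 4 * x ^ γ) {s : ℝ} (hs : 1 ≤ |s|) :
    mgf X μ s ≤ exp ((A + log (1 + C₀)) * |s| ^ q) := by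
  have hdom : ∀ ω, exp (s * X ω) ≤ exp (A * |s| ^ q) * exp (c₀ / 2 * |X ω| ^ γ) := fun ω =>
    (exp_mul_le_of_young hyoung s (X ω)).trans (by gcongr; linarith)
  have hlog : log (1 + C₀) ≤ log (1 + C₀) * |s| ^ q :=
    le_mul_of_one_le_right (log_nonneg (by linarith)) (one_le_rpow hs hq)
  calc mgf X μ s ≤ ∫ ω, exp (A * |s| ^ q) * exp (c₀ / 2 * |X ω| ^ γ) ∂μ :=
        integral_mono_of_nonneg (ae_of_all _ fun ω => (exp_pos _).le)
          ((hX.integrable_exp hXm hC₀ hc₀ hγ).const_mul _) (ae_of_all _ hdom)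
    _ ≤ exp (A * |s| ^ q) * (1 + C₀) := by
        rw [integral_const_mul]
        exact mul_le_mul_of_nonneg_left (hX.integral_exp_le hXm hC₀ hc₀ hγ) (exp_pos _).le
    _ = exp (A * |s| ^ q + log (1 + C₀)) := by rw [exp_add, exp_log (by linarith)]
    _ ≤ exp ((A + log (1 + C₀)) * |s| ^ q) := by gcongr; linarith

theorem mgf_le_of_abs_le_one (hX : HasWeibullTail X μ C₀ c₀ γ) (hXi : Integrable X μ)
    (hX0 : μ[X] = 0) (hC₀ : 0 ≤ C₀) (hc₀ : 0 < c₀) (hγ : 1 ≤ γ) (hA : 0 ≤ A) (hq : 0 ≤ q)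
    (hyoung : ∀ s x : ℝ, 0 ≤ x → |s| * x ≤ A * |s| ^ q + c₀ / 4 * x ^ γ) {s : ℝ} (hs : |s| ≤ 1) :
    mgf X μ s ≤ exp ((1 + 2 / (c₀ / 4) ^ 2) * exp A * (1 + C₀) * s ^ 2) := by
  set B := (1 + 2 / (c₀ / 4) ^ 2) * exp A
  set Z := fun ω => exp (c₀ / 2 * |X ω| ^ γ)
  have hZ : Integrable Z μ := hX.integrable_exp hXi.aemeasurable hC₀ hc₀ (by linarith)
  have hdom : ∀ ω, exp (s * X ω) ≤ 1 + (s * X ω + s ^ 2 * B * Z ω) := fun ω => by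
    have h := exp_mul_le_one_add_add_sq_mul_of_young (by positivity : 0 < c₀ / 4) hγ hA hq hyoung
      hs (X ω)
    rw [show 2 * (c₀ / 4) = c₀ / 2 by ring] at h
    exact h.trans_eq (by ring)
  have hint : Integrable (fun ω => s * X ω + s ^ 2 * B * Z ω) μ :=
    (hXi.const_mul s).add (hZ.const_mul _)
  calc mgf X μ s ≤ ∫ ω, 1 + (s * X ω + s ^ 2 * B * Z ω) ∂μ :=
        integral_mono_of_nonneg (ae_of_all _ fun ω => (exp_pos _).le)
          ((integrable_const 1).add hint) (ae_of_all _ hdom)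
    _ = 1 + s ^ 2 * B * ∫ ω, Z ω ∂μ := by
        rw [integral_add (integrable_const 1) hint,
          integral_add (hXi.const_mul s) (hZ.const_mul _), integral_const_mul,
          integral_const_mul, hX0]
        simp
    _ ≤ 1 + s ^ 2 * B * (1 + C₀) := by
        gcongr
        exact hX.integral_exp_le hXi.aemeasurable hC₀ hc₀ (by linarith)
    _ ≤ exp (B * (1 + C₀) * s ^ 2) := by linarith [add_one_le_exp (B * (1 + C₀) * s ^ 2)]

end HasWeibullTail

theorem exists_mgf_le_of_hasWeibullTail {C₀ c₀ γ q : ℝ} (hC₀ : 0 ≤ C₀) (hc₀ : 0 < c₀)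
    (hγq : γ.HolderConjugate q) :
    ∃ K > 0, ∀ {Ω : Type*} [MeasurableSpace Ω] (μ : Measure Ω) [IsProbabilityMeasure μ]
      (X : Ω → ℝ), HasWeibullTail X μ C₀ c₀ γ → Integrable X μ → μ[X] = 0 →
      ∀ s, mgf X μ s ≤ exp (K * (s ^ 2 + |s| ^ q)) := by
  obtain ⟨A, hA, hyoung⟩ := exists_abs_mul_le_rpow_add_rpow hγq (by positivity : 0 < c₀ / 4)
  set K₁ := (1 + 2 / (c₀ / 4) ^ 2) * exp A * (1 + C₀)
  set K₂ := A + log (1 + C₀)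
  have hK₁ : 0 < K₁ := by positivity
  have hK₂ : 0 ≤ K₂ := add_nonneg hA.le (log_nonneg (by linarith))
  refine ⟨K₁ + K₂, by linarith, fun μ _ X hX hXi hX0 s => ?_⟩
  have hsq := mul_nonneg (add_nonneg hK₁.le hK₂) (sq_nonneg s)
  have hsq' := mul_nonneg (add_nonneg hK₁.le hK₂) (rpow_nonneg (abs_nonneg s) q)
  rcases le_total |s| 1 with hs | hs
  · refine (hX.mgf_le_of_abs_le_one hXi hX0 hC₀ hc₀ hγq.lt.le hA.le
      hγq.symm.nonneg hyoung hs).trans (exp_le_exp.2 ?_)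
    nlinarith [mul_nonneg hK₂ (sq_nonneg s)]
  · refine (hX.mgf_le_of_one_le_abs hXi.aemeasurable hC₀ hc₀ hγq.pos hγq.symm.nonneg hyoung
      hs).trans (exp_le_exp.2 ?_)
    nlinarith [mul_nonneg hK₁.le (rpow_nonneg (abs_nonneg s) q)]

section WeightedSums

variable {Ω ι : Type*} [MeasurableSpace Ω] {μ : Measure Ω} {g : ι → Ω → ℝ}

theorem ProbabilityTheory.iIndepFun.integrable_exp_mul_sum_mul [IsProbabilityMeasure μ]
    (hind : iIndepFun g μ) (hm : ∀ i, Measurable (g i))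
    (hint : ∀ i t, Integrable (fun ω => exp (t * g i ω)) μ) (s : Finset ι) (c : ι → ℝ) (t : ℝ) :
    Integrable (fun ω => exp (t * ∑ i ∈ s, c i * g i ω)) μ := by
  have hind' : iIndepFun (fun i ω => c i * g i ω) μ :=
    hind.comp (fun i x => c i * x) fun i => measurable_const_mul (c i)
  simpa only [Finset.sum_apply] using hind'.integrable_exp_mul_sum
    (fun i => (hm i).const_mul (c i)) (s := s) (t := t)
    fun i _ => by simpa only [mul_assoc] using hint i (t * c i)

theorem ProbabilityTheory.iIndepFun.mgf_sum_mul_le (hind : iIndepFun g μ)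
    (hm : ∀ i, Measurable (g i)) {K p : ℝ} (hK : 0 ≤ K) (hp : 2 ≤ p)
    (hmgf : ∀ i s, mgf (g i) μ s ≤ exp (K * (s ^ 2 + |s| ^ p))) (s : Finset ι) (c : ι → ℝ)
    (t : ℝ) :
    mgf (fun ω => ∑ i ∈ s, c i * g i ω) μ t ≤
      exp (K * ((t * √(∑ i ∈ s, c i ^ 2)) ^ 2 + |t * √(∑ i ∈ s, c i ^ 2)| ^ p)) := by
  have hsum : (fun ω => ∑ i ∈ s, c i * g i ω) = ∑ i ∈ s, fun ω => c i * g i ω := by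
    rw [Finset.sum_fn]
  have hind' : iIndepFun (fun i ω => c i * g i ω) μ :=
    hind.comp (fun i x => c i * x) fun i => measurable_const_mul (c i)
  rw [hsum, hind'.mgf_sum fun i => (hm i).const_mul (c i)]
  have hsq : ∑ i ∈ s, (c i * t) ^ 2 = (t * √(∑ i ∈ s, c i ^ 2)) ^ 2 := by
    rw [mul_pow, sq_sqrt (Finset.sum_nonneg fun i _ => sq_nonneg _), Finset.mul_sum]
    exact Finset.sum_congr rfl fun i _ => by ring
  have hrpow : ∑ i ∈ s, |c i * t| ^ p ≤ |t * √(∑ i ∈ s, c i ^ 2)| ^ p := by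
    simp only [abs_mul, mul_rpow (abs_nonneg _) (abs_nonneg _), abs_of_nonneg (sqrt_nonneg _)]
    rw [← Finset.sum_mul, mul_comm, mul_rpow (abs_nonneg t) (sqrt_nonneg _)]
    gcongr
    exact s.sum_abs_rpow_le_sqrt_sum_sq_rpow c hp
  calc ∏ i ∈ s, mgf (fun ω => c i * g i ω) μ t
      ≤ ∏ i ∈ s, exp (K * ((c i * t) ^ 2 + |c i * t| ^ p)) :=
        Finset.prod_le_prod (fun i _ => mgf_nonneg) fun i _ => by
          rw [mgf_const_mul]; exact hmgf i _
    _ = exp (K * (∑ i ∈ s, (c i * t) ^ 2 + ∑ i ∈ s, |c i * t| ^ p)) := by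
        rw [← exp_sum, ← Finset.sum_add_distrib, Finset.mul_sum]
    _ ≤ _ := by rw [hsq]; gcongr

end WeightedSums

theorem chernoff_exponent_le {K ε γ q x : ℝ} (hK : 0 ≤ K) (hε : 0 < ε) (hε1 : ε ≤ 1)
    (hεK : 4 * K * ε ≤ 1) (hγq : γ.HolderConjugate q) (hγ2 : γ ≤ 2) (hx : 1 ≤ x) :
    -(ε * x ^ (γ - 1) * x) + K * ((ε * x ^ (γ - 1)) ^ 2 + |ε * x ^ (γ - 1)| ^ q) ≤
      -(ε / 2) * x ^ γ := by
  have hx0 : 0 < x := one_pos.trans_le hx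
  have hlin : x ^ (γ - 1) * x = x ^ γ := by rw [rpow_sub_one hx0.ne', div_mul_cancel₀ _ hx0.ne']
  have hsq : (ε * x ^ (γ - 1)) ^ 2 ≤ ε ^ 2 * x ^ γ := by
    rw [mul_pow, ← rpow_mul_natCast hx0.le]
    exact mul_le_mul_of_nonneg_left (rpow_le_rpow_of_exponent_le hx (by push_cast; linarith))
      (sq_nonneg ε)
  have hq : |ε * x ^ (γ - 1)| ^ q ≤ ε ^ 2 * x ^ γ := by
    rw [abs_of_pos (by positivity), mul_rpow hε.le (by positivity), ← rpow_mul hx0.le,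
      hγq.sub_one_mul_conj, ← rpow_two]
    exact mul_le_mul_of_nonneg_right
      (rpow_le_rpow_of_exponent_ge hε hε1 (hγq.two_le_of_le_two hγ2)) (by positivity)
  have hxγ : 0 ≤ x ^ γ := by positivity
  rw [mul_assoc, hlin]
  nlinarith [mul_le_mul_of_nonneg_left (add_le_add hsq hq) hK,
    mul_le_mul_of_nonneg_right (mul_le_mul_of_nonneg_right hεK hε.le) hxγ]

section TailFromMGF

variable {Ω : Type*} [MeasurableSpace Ω] {μ : Measure Ω} [IsProbabilityMeasure μ] {X : Ω → ℝ}
  {K ε γ q σ ρ : ℝ}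

theorem measure_ge_le_of_mgf_le (hK : 0 ≤ K) (hε : 0 < ε) (hε1 : ε ≤ 1) (hεK : 4 * K * ε ≤ 1)
    (hγq : γ.HolderConjugate q) (hγ2 : γ ≤ 2)
    (hint : ∀ t, Integrable (fun ω => exp (t * X ω)) μ)
    (hmgf : ∀ t, mgf X μ t ≤ exp (K * ((t * σ) ^ 2 + |t * σ| ^ q))) (hσ : 0 < σ)
    (hx : 1 ≤ ρ / σ) :
    μ {ω | ρ ≤ X ω} ≤ ENNReal.ofReal (exp (-(ε / 2) * (ρ / σ) ^ γ)) := by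
  set x := ρ / σ
  set t := ε * x ^ (γ - 1) / σ
  have ht : 0 ≤ t := by positivity
  have htσ : t * σ = ε * x ^ (γ - 1) := div_mul_cancel₀ _ hσ.ne'
  have htρ : t * ρ = ε * x ^ (γ - 1) * x := by rw [← htσ, mul_assoc, mul_div_cancel₀ _ hσ.ne']
  rw [ENNReal.le_ofReal_iff_toReal_le (measure_ne_top _ _) (exp_pos _).le]
  calc μ.real {ω | ρ ≤ X ω} ≤ exp (-t * ρ) * mgf X μ t := measure_ge_le_exp_mul_mgf ρ ht (hint t)
    _ ≤ exp (-t * ρ) * exp (K * ((t * σ) ^ 2 + |t * σ| ^ q)) := by gcongr; exact hmgf t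
    _ ≤ exp (-(ε / 2) * x ^ γ) := by
        rw [← exp_add, exp_le_exp, neg_mul, htρ, htσ]
        exact chernoff_exponent_le hK hε hε1 hεK hγq hγ2 hx

theorem measure_abs_ge_le_of_mgf_le (hK : 0 ≤ K) (hε : 0 < ε) (hε1 : ε ≤ 1)
    (hεK : 4 * K * ε ≤ 1) (hγq : γ.HolderConjugate q) (hγ2 : γ ≤ 2)
    (hint : ∀ t, Integrable (fun ω => exp (t * X ω)) μ)
    (hmgf : ∀ t, mgf X μ t ≤ exp (K * ((t * σ) ^ 2 + |t * σ| ^ q))) (hσ : 0 < σ) (hρ : 0 ≤ ρ) :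
    μ {ω | ρ ≤ |X ω|} ≤ ENNReal.ofReal (2 * exp (ε / 2) * exp (-(ε / 2) * (ρ / σ) ^ γ)) := by
  rcases lt_or_ge (ρ / σ) 1 with hx | hx
  · have hxγ : (ρ / σ) ^ γ ≤ 1 := rpow_le_one (by positivity) hx.le hγq.nonneg
    refine prob_le_one.trans (ENNReal.one_le_ofReal.2 ?_)
    rw [mul_assoc, ← exp_add]
    nlinarith [one_le_exp (by nlinarith : 0 ≤ ε / 2 + -(ε / 2) * (ρ / σ) ^ γ)]
  have hupper := measure_ge_le_of_mgf_le hK hε hε1 hεK hγq hγ2 hint hmgf hσ hx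
  have hlower := measure_ge_le_of_mgf_le (X := -X) hK hε hε1 hεK hγq hγ2
    (fun t => by simpa using hint (-t)) (fun t => by simpa [mgf_neg] using hmgf (-t)) hσ hx
  calc μ {ω | ρ ≤ |X ω|} ≤ μ ({ω | ρ ≤ X ω} ∪ {ω | ρ ≤ (-X) ω}) :=
        measure_mono fun ω (hω : ρ ≤ |X ω|) => show _ ∨ _ from le_abs.1 hω
    _ ≤ μ {ω | ρ ≤ X ω} + μ {ω | ρ ≤ (-X) ω} := measure_union_le _ _
    _ ≤ ENNReal.ofReal (exp (-(ε / 2) * (ρ / σ) ^ γ) + exp (-(ε / 2) * (ρ / σ) ^ γ)) := by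
        rw [ENNReal.ofReal_add (exp_pos _).le (exp_pos _).le]
        exact add_le_add hupper hlower
    _ ≤ _ := by
        gcongr
        nlinarith [one_le_exp (by positivity : 0 ≤ ε / 2), exp_pos (-(ε / 2) * (ρ / σ) ^ γ)]

end TailFromMGF

/-- Concentration for linear combinations of independent centered random variables with
a common stretched-exponential tail bound of exponent `γ ∈ (1,2]`:
`P(|∑ cₙ gₙ| ≥ ρ) ≤ C exp(-c (ρ/‖c‖_{ℓ²})^γ)`. -/
theorem stmt_9 (C₀ c₀ γ : ℝ) (hC₀ : 0 < C₀) (hc₀ : 0 < c₀) (hγ1 : 1 < γ) (hγ2 : γ ≤ 2) :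
    ∃ C c : ℝ, 0 < C ∧ 0 < c ∧
      ∀ (Ω : Type) (_ : MeasurableSpace Ω) (μ : Measure Ω), IsProbabilityMeasure μ →
        ∀ g : ℕ → Ω → ℝ, (∀ n, Measurable (g n)) →
          iIndepFun g μ →
          (∀ n, Integrable (g n) μ) → (∀ n, (∫ ω, g n ω ∂μ) = 0) →
          (∀ n, ∀ ρ : ℝ, 0 ≤ ρ →
            μ {ω | ρ ≤ |g n ω|} ≤ ENNReal.ofReal (C₀ * Real.exp (-c₀ * ρ ^ γ))) →
          ∀ (F : Finset ℕ) (cs : ℕ → ℝ), (∃ n ∈ F, cs n ≠ 0) →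
            ∀ ρ : ℝ, 0 ≤ ρ →
              μ {ω | ρ ≤ |∑ n ∈ F, cs n * g n ω|} ≤
                ENNReal.ofReal (C * Real.exp
                  (-c * (ρ / Real.sqrt (∑ n ∈ F, cs n ^ 2)) ^ γ)) := by
  have hγq := HolderConjugate.conjExponent hγ1
  obtain ⟨K, hK, hmgf⟩ := exists_mgf_le_of_hasWeibullTail hC₀.le hc₀ hγq
  set ε := min 1 (4 * K)⁻¹
  have hε : 0 < ε := by positivity
  have hεK : 4 * K * ε ≤ 1 :=
    calc 4 * K * ε ≤ 4 * K * (4 * K)⁻¹ := by gcongr; exact min_le_right _ _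
      _ = 1 := mul_inv_cancel₀ (by positivity)
  refine ⟨2 * exp (ε / 2), ε / 2, by positivity, by positivity, ?_⟩
  intro Ω _ μ _ g hgm hind hgi hg0 htail F cs ⟨n, hn, hcs⟩ ρ hρ
  have hσ : 0 < √(∑ n ∈ F, cs n ^ 2) :=
    sqrt_pos.2 (Finset.sum_pos' (fun i _ => sq_nonneg _) ⟨n, hn, by positivity⟩)
  exact measure_abs_ge_le_of_mgf_le hK.le hε (min_le_left _ _) hεK hγq hγ2
    (hind.integrable_exp_mul_sum_mul hgm
      (fun i => HasWeibullTail.integrable_exp_mul (htail i) (hgm i).aemeasurable hC₀.le hc₀ hγ1)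
      F cs)
    (hind.mgf_sum_mul_le hgm hK.le (hγq.two_le_of_le_two hγ2)
      (fun i => hmgf μ (g i) (htail i) (hgi i) (hg0 i)) F cs) hσ hρ
end

section
/- Let p ≥ 1 be an integer and let (X_n)_{n ∈ ℕ} be a sequence of independent real-valued random variables on a probability space (Ω, P) such that E[X_n] = 0 for every n and each X_n has finite moments of all orders up to 2p. Let (n_1, …, n_{2p}) ∈ ℕ^{2p}. If E[ X_{n_1}·X_{n_2}·⋯·X_{n_{2p}} ] ≠ 0, then there exists a permutation σ of {1, …, 2p} such that σ has no fixed point, every cycle of σ has length 2 or 3, and n_{σ(i)} = n_i for every i ∈ {1, …, 2p}. -/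
/-!
If some index value `b` occurs exactly once among the `n i`, independence splits
`E[∏ X_{n i}]` into `∏_b E[X_b ^ m_b]` (with `m_b` the multiplicity of `b`), which contains the
factor `E[X_b] = 0`. So every index value occurs at least twice, and then each fibre of `n` can
be cut into cycles of length 2 or 3: peel off a 2-cycle while at least four points remain, and
finish with one cycle on the last two or three.
-/

open MeasureTheory ProbabilityTheory Finset Equiv

section Combinatorics

variable {α β : Type*} [DecidableEq α]

theorem Finset.exists_isCycle_support_eq [Fintype α] (s : Finset α) (hs : 2 ≤ #s) :
    ∃ σ : Perm α, σ.IsCycle ∧ σ.support = s := by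
  have hlen : 2 ≤ s.toList.length := by rwa [length_toList]
  refine ⟨s.toList.formPerm, List.isCycle_formPerm s.nodup_toList hlen, ?_⟩
  rw [List.support_formPerm_of_nodup _ s.nodup_toList, toList_toFinset]
  rintro x hx
  simp [hx] at hlen

theorem Finset.exists_subset_card_two_or_three (t : Finset α) (ht : 2 ≤ #t) :
    ∃ u ⊆ t, (#u = 2 ∨ #u = 3) ∧ #(t \ u) ≠ 1 := by
  rcases le_or_gt #t 3 with ht3 | ht3
  · exact ⟨t, Subset.rfl, by omega, by simp⟩
  · obtain ⟨u, hut, hu⟩ := exists_subset_card_eq (show 2 ≤ #t by omega)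
    exact ⟨u, hut, .inl hu, by rw [card_sdiff_of_subset hut]; omega⟩

theorem Equiv.Perm.comp_eq_of_support_subset [Fintype α] {f : α → β} {σ : Perm α}
    {u : Finset α} (hσ : σ.support ⊆ u) (hf : ∀ x ∈ u, ∀ y ∈ u, f x = f y) : f ∘ σ = f := by
  funext x
  by_cases hx : x ∈ σ.support
  · exact hf _ (hσ (Perm.apply_mem_support.mpr hx)) _ (hσ hx)
  · rw [Function.comp_apply, Perm.notMem_support.mp hx]

variable [DecidableEq β]

theorem Finset.forall_exists_ne_apply_eq_sdiff {f : α → β} {s u : Finset α} {c : β}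
    (hs : ∀ x ∈ s, ∃ y ∈ s, y ≠ x ∧ f y = f x) (hu : u ⊆ {y ∈ s | f y = c})
    (hcard : #({y ∈ s | f y = c} \ u) ≠ 1) :
    ∀ x ∈ s \ u, ∃ y ∈ s \ u, y ≠ x ∧ f y = f x := by
  intro x hx
  obtain ⟨hxs, hxu⟩ := mem_sdiff.mp hx
  by_cases hfx : f x = c
  · -- `x` lies in the rest of the fibre of `c`, which therefore has a second element
    have hx' : x ∈ {y ∈ s | f y = c} \ u := by simp [hxs, hxu, hfx]
    have hpos := card_pos.mpr ⟨x, hx'⟩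
    obtain ⟨y, hy, hyx⟩ := exists_mem_ne (s := {y ∈ s | f y = c} \ u) (by omega) x
    simp only [mem_sdiff, mem_filter] at hy
    exact ⟨y, mem_sdiff.mpr ⟨hy.1.1, hy.2⟩, hyx, hy.1.2.trans hfx.symm⟩
  · obtain ⟨y, hys, hyx, hfy⟩ := hs x hxs
    have hyu : y ∉ u := fun hyu => hfx (hfy ▸ (mem_filter.mp (hu hyu)).2)
    exact ⟨y, mem_sdiff.mpr ⟨hys, hyu⟩, hyx, hfy⟩

theorem Finset.exists_perm_support_eq_cycleType_two_or_three [Fintype α] (f : α → β)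
    (s : Finset α) (hs : ∀ x ∈ s, ∃ y ∈ s, y ≠ x ∧ f y = f x) :
    ∃ σ : Perm α, σ.support = s ∧ (∀ k ∈ σ.cycleType, k = 2 ∨ k = 3) ∧ f ∘ σ = f := by
  induction s using strongInduction with
  | _ s ih =>
  obtain rfl | ⟨x, hx⟩ := s.eq_empty_or_nonempty
  · exact ⟨1, by simp, by simp, rfl⟩
  set t := {y ∈ s | f y = f x}
  have ht : 2 ≤ #t := by
    obtain ⟨y, hys, hyx, hfy⟩ := hs x hx
    exact one_lt_card.mpr ⟨y, by simp [t, hys, hfy], x, by simp [t, hx], hyx⟩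
  obtain ⟨u, hut, hu, hcard⟩ := t.exists_subset_card_two_or_three ht
  have hus : u ⊆ s := hut.trans (filter_subset _ _)
  obtain ⟨τ, hτ, hτu⟩ := u.exists_isCycle_support_eq (by omega)
  obtain ⟨σ, hσ, hσcyc, hσf⟩ := ih (s \ u)
    (sdiff_ssubset hus (card_pos.mp (by omega)))
    (forall_exists_ne_apply_eq_sdiff hs hut hcard)
  have hdisj : τ.Disjoint σ := by
    rw [Perm.disjoint_iff_disjoint_support, hτu, hσ]
    exact disjoint_sdiff
  have hτf : f ∘ τ = f := Perm.comp_eq_of_support_subset hτu.le fun y hy z hz =>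
    (mem_filter.mp (hut hy)).2.trans (mem_filter.mp (hut hz)).2.symm
  refine ⟨τ * σ, ?_, ?_, ?_⟩
  · rw [hdisj.support_mul, hτu, hσ, union_sdiff_of_subset hus]
  · simpa [hdisj.cycleType_mul, hτ.cycleType, hτu, or_imp, forall_and, hu] using hσcyc
  · rw [Perm.coe_mul, ← Function.comp_assoc, hτf, hσf]

end Combinatorics

theorem ProbabilityTheory.iIndepFun.integral_fun_prod_eq_zero_of_unique_index
    {Ω ι κ : Type*} [MeasurableSpace Ω] {μ : Measure Ω} [Fintype κ] {X : ι → Ω → ℝ}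
    (hX : iIndepFun X μ) (hmeas : ∀ i, AEMeasurable (X i) μ) (n : κ → ι) {j : κ}
    (hj : ∀ k, n k = n j → k = j) (hmean : ∫ ω, X (n j) ω ∂μ = 0) :
    ∫ ω, ∏ k, X (n k) ω ∂μ = 0 := by
  classical
  set s := univ.image n
  have hgroup : ∀ ω, ∏ k, X (n k) ω = ∏ i : s, X i ω ^ #{k | n k = i} := fun ω => by
    rw [prod_comp (fun i => X i ω) n, prod_coe_sort s (fun i => X i ω ^ #{k | n k = i})]
  have hfactor := (hX.precomp Subtype.val_injective).integral_fun_prod_comp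
    (f := fun (i : s) x => x ^ #{k | n k = i}) (fun i => hmeas i)
    (fun _ => (measurable_id.pow_const _).aestronglyMeasurable)
  have hsingle : #{k | n k = n j} = 1 :=
    card_eq_one.mpr ⟨j, by ext k; simpa using ⟨hj k, fun h => h ▸ rfl⟩⟩
  simp_rw [hgroup]
  rw [hfactor]
  exact prod_eq_zero (mem_univ ⟨n j, mem_image_of_mem n (mem_univ j)⟩) (by simp [hsingle, hmean])

theorem stmt_12_general {Ω : Type} [MeasurableSpace Ω] (μ : Measure Ω)
    (p : ℕ) (X : ℕ → Ω → ℝ) (hmeas : ∀ n, Measurable (X n))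
    (hindep : iIndepFun X μ)
    (hmean : ∀ n, (∫ ω, X n ω ∂μ) = 0)
    (n : Fin (2 * p) → ℕ)
    (h : (∫ ω, ∏ i, X (n i) ω ∂μ) ≠ 0) :
    ∃ σ : Equiv.Perm (Fin (2 * p)),
      (∀ i, σ i ≠ i) ∧ (∀ k ∈ σ.cycleType, k = 2 ∨ k = 3) ∧ ∀ i, n (σ i) = n i := by
  have hpartner : ∀ i ∈ univ, ∃ j ∈ univ, j ≠ i ∧ n j = n i := by
    intro i _
    by_contra! hi
    exact h (hindep.integral_fun_prod_eq_zero_of_unique_index (fun b => (hmeas b).aemeasurable) n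
      (fun j hj => by_contra fun hji => hi j (mem_univ j) hji hj) (hmean _))
  obtain ⟨σ, hσ, hcyc, hσn⟩ := univ.exists_perm_support_eq_cycleType_two_or_three n hpartner
  refine ⟨σ, fun i => Perm.mem_support.mp (hσ ▸ mem_univ i), hcyc, congrFun hσn⟩

/-- If `E[X_{n_1} ⋯ X_{n_{2p}}] ≠ 0` for independent centered random variables with
finite moments up to order `2p`, then there is a fixed-point-free permutation `σ` of
`{1,…,2p}` whose cycles all have length 2 or 3 such that `n_{σ(i)} = n_i` for all `i`. -/
theorem stmt_12 {Ω : Type} [MeasurableSpace Ω] (μ : Measure Ω) [IsProbabilityMeasure μ]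
    (p : ℕ) (hp : 1 ≤ p) (X : ℕ → Ω → ℝ) (hmeas : ∀ n, Measurable (X n))
    (hindep : iIndepFun X μ)
    (hmean : ∀ n, (∫ ω, X n ω ∂μ) = 0)
    (hmom : ∀ n, ∀ k ≤ 2 * p, Integrable (fun ω => |X n ω| ^ k) μ)
    (n : Fin (2 * p) → ℕ)
    (h : (∫ ω, ∏ i, X (n i) ω ∂μ) ≠ 0) :
    ∃ σ : Equiv.Perm (Fin (2 * p)),
      (∀ i, σ i ≠ i) ∧ (∀ k ∈ σ.cycleType, k = 2 ∨ k = 3) ∧ ∀ i, n (σ i) = n i :=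
  stmt_12_general μ p X hmeas hindep hmean n h
end

section
/- There exists a constant C > 0 such that for every integer p ≥ 1, the number of permutations σ of the set {1, …, 2p} having no fixed point and whose disjoint-cycle decomposition consists only of cycles of length 2 or 3 is at most (C·p)^{4p/3}. -/
/-!
Mark in each cycle its least element. A permutation all of whose cycles have length 2 or 3 is
determined by the set of non-minimal points together with its values there, and at least a third
of the `2p` points are minima, so at most `4p/3` are not. Hence there are at most
`2^(2p) (2p+1)^(4p/3) ≤ (12p)^(4p/3)` such permutations.
-/

open Equiv Finset

section ShortCycles

variable {α : Type*}

def HasCyclesOfLengthTwoOrThree (σ : Perm α) : Prop :=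
  ∀ i, σ i ≠ i ∧ (σ (σ i) = i ∨ σ (σ (σ i)) = i)

theorem hasCyclesOfLengthTwoOrThree_of_cycleType [Fintype α] [DecidableEq α] {σ : Perm α}
    (hfix : ∀ i, σ i ≠ i) (hcyc : ∀ k ∈ σ.cycleType, k = 2 ∨ k = 3) :
    HasCyclesOfLengthTwoOrThree σ := by
  intro i
  refine ⟨hfix i, ?_⟩
  have hmem : #(σ.cycleOf i).support ∈ σ.cycleType :=
    Multiset.mem_map.2 ⟨σ.cycleOf i, by
      rw [← Finset.mem_def, Perm.cycleOf_mem_cycleFactorsFinset_iff, Perm.mem_support]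
      exact hfix i, rfl⟩
  have hperiod : (σ ^ #(σ.cycleOf i).support) i = i := by
    simpa using (σ.pow_mod_card_support_cycleOf_self_apply #(σ.cycleOf i).support i).symm
  rcases hcyc _ hmem with h | h <;> rw [h] at hperiod
  · exact .inl (by simpa [pow_succ] using hperiod)
  · exact .inr (by simpa [pow_succ] using hperiod)

variable [LinearOrder α] {σ τ : Perm α}

/-- For `σ` with cycles of length 2 or 3, `i` is the least element of its cycle. -/
def IsCycleMin (σ : Perm α) (i : α) : Prop := i ≤ σ i ∧ i ≤ σ (σ i)

theorem IsCycleMin.two_or_three_cycle (hσ : HasCyclesOfLengthTwoOrThree σ) {m : α}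
    (hm : IsCycleMin σ m) :
    (σ (σ m) = m ∧ ¬ IsCycleMin σ (σ m)) ∨
      (σ (σ (σ m)) = m ∧ σ (σ m) ≠ m ∧
        ¬ IsCycleMin σ (σ m) ∧ ¬ IsCycleMin σ (σ (σ m))) := by
  unfold IsCycleMin at *
  have := hσ m
  grind

/-- At a common minimum `m`, the values of `σ` and `τ` at the other points of the cycle force
the cycle to close up in the same way. -/
theorem eq_of_eqOn_not_isCycleMin (hσ : HasCyclesOfLengthTwoOrThree σ)
    (hτ : HasCyclesOfLengthTwoOrThree τ) (hmin : ∀ i, IsCycleMin σ i ↔ IsCycleMin τ i)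
    (heq : ∀ i, ¬ IsCycleMin σ i → σ i = τ i) :
    σ = τ := by
  ext m
  by_cases hm : IsCycleMin σ m
  · rcases hm.two_or_three_cycle hσ with hσm | hσm <;>
      rcases ((hmin m).1 hm).two_or_three_cycle hτ with hτm | hτm <;>
      grind [EmbeddingLike.apply_eq_iff_eq]
  · exact heq m hm

instance : DecidablePred (IsCycleMin σ) := fun _ => instDecidableAnd

def cycleMin (σ : Perm α) (i : α) : α := min i (min (σ i) (σ (σ i)))

theorem isCycleMin_cycleMin (hσ : HasCyclesOfLengthTwoOrThree σ) (i : α) :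
    IsCycleMin σ (cycleMin σ i) := by
  unfold IsCycleMin cycleMin
  have := hσ i
  grind

theorem eq_or_eq_or_eq_of_cycleMin_eq (hσ : HasCyclesOfLengthTwoOrThree σ) {i m : α}
    (h : cycleMin σ i = m) : i = m ∨ i = σ m ∨ i = σ (σ m) := by
  unfold cycleMin at h
  have := hσ i
  grind

theorem card_le_three_mul_card_isCycleMin [Fintype α] (hσ : HasCyclesOfLengthTwoOrThree σ) :
    Fintype.card α ≤ 3 * #{i | IsCycleMin σ i} := by
  calc Fintype.card α = #(univ : Finset α) := rfl
    _ ≤ 3 * #(univ.image (cycleMin σ)) := card_le_mul_card_image _ 3 fun m _ ↦ by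
        refine (card_le_card (t := {m, σ m, σ (σ m)}) fun i hi ↦ ?_).trans card_le_three
        simpa using eq_or_eq_or_eq_of_cycleMin_eq hσ (mem_filter.1 hi).2
    _ ≤ 3 * #{i | IsCycleMin σ i} := by
        gcongr
        intro m hm
        obtain ⟨i, -, rfl⟩ := mem_image.1 hm
        simpa using isCycleMin_cycleMin hσ i

def encodeOffCycleMin (σ : Perm α) (i : α) : Option α :=
  if IsCycleMin σ i then none else some (σ i)

theorem eq_of_encodeOffCycleMin_eq (hσ : HasCyclesOfLengthTwoOrThree σ)
    (hτ : HasCyclesOfLengthTwoOrThree τ) (h : encodeOffCycleMin σ = encodeOffCycleMin τ) :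
    σ = τ := by
  have hi := congrFun h
  simp only [encodeOffCycleMin] at hi
  have hmin : ∀ i, IsCycleMin σ i ↔ IsCycleMin τ i := fun i ↦ by
    have := hi i
    by_cases h₁ : IsCycleMin σ i <;> by_cases h₂ : IsCycleMin τ i <;>
      simp [h₁, h₂] at this ⊢
  refine eq_of_eqOn_not_isCycleMin hσ hτ hmin fun i hσi ↦ ?_
  simpa [hσi, (hmin i).not.1 hσi] using hi i

theorem three_mul_card_isSome_encodeOffCycleMin_le [Fintype α]
    (hσ : HasCyclesOfLengthTwoOrThree σ) :
    3 * #{i | (encodeOffCycleMin σ i).isSome} ≤ 2 * Fintype.card α := by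
  have hsupp : #{i | (encodeOffCycleMin σ i).isSome} = #{i | ¬ IsCycleMin σ i} := by
    congr 1; ext i; by_cases h : IsCycleMin σ i <;> simp [encodeOffCycleMin, h]
  have hsplit : #{i | IsCycleMin σ i} + #{i | ¬ IsCycleMin σ i} = Fintype.card α :=
    card_filter_add_card_filter_not _
  have hmin := card_le_three_mul_card_isCycleMin hσ
  omega

end ShortCycles

theorem card_filter_card_isSome_le {α β : Type*} [Fintype α] [DecidableEq α] [Fintype β]
    (K : ℕ) :
    #{f : α → Option β | #{a | (f a).isSome} ≤ K} ≤
      (Fintype.card β + 1) ^ K * 2 ^ Fintype.card α := by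
  set supp : (α → Option β) → Finset α := fun f ↦ {a | (f a).isSome}
  calc #{f : α → Option β | #(supp f) ≤ K}
      ≤ (Fintype.card β + 1) ^ K * #(image supp {f | #(supp f) ≤ K}) := by
        refine card_le_mul_card_image _ _ fun t ht ↦ ?_
        obtain ⟨f₀, hf₀, rfl⟩ := mem_image.1 ht
        have hinj : Set.InjOn (fun f (a : supp f₀) ↦ f a)
            {f | f ∈ ({f | #(supp f) ≤ K} : Finset _) ∧ supp f = supp f₀} := by
          intro f hf g hg hfg
          funext a
          by_cases ha : a ∈ supp f₀
          · exact congrFun hfg ⟨a, ha⟩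
          · have hfa : a ∉ supp f := hf.2 ▸ ha
            have hga : a ∉ supp g := hg.2 ▸ ha
            simp only [supp, mem_filter, mem_univ, true_and, Option.not_isSome_iff_eq_none]
              at hfa hga
            rw [hfa, hga]
        calc _ ≤ #(univ : Finset (supp f₀ → Option β)) :=
              card_le_card_of_injOn _ (fun _ _ ↦ mem_coe.2 (mem_univ _))
                (by simpa only [coe_filter] using hinj)
          _ = (Fintype.card β + 1) ^ #(supp f₀) := by simp
          _ ≤ (Fintype.card β + 1) ^ K := pow_le_pow_right₀ (by omega) (mem_filter.1 hf₀).2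
    _ ≤ (Fintype.card β + 1) ^ K * 2 ^ Fintype.card α := by
        gcongr
        exact (card_le_univ _).trans (Fintype.card_finset (α := α)).le

theorem two_mul_add_one_pow_mul_four_pow_le {p : ℕ} (hp : 1 ≤ p) :
    ((2 * p + 1 : ℝ) ^ (4 * p / 3) * 4 ^ p) ≤ (12 * p) ^ ((4 * (p : ℝ)) / 3) := by
  have hp' : (1 : ℝ) ≤ p := by exact_mod_cast hp
  have hexp : ((4 * p / 3 : ℕ) : ℝ) ≤ 4 * (p : ℝ) / 3 := by
    simpa using Nat.cast_div_le (m := 4 * p) (n := 3) (α := ℝ)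
  calc ((2 * p + 1 : ℝ) ^ (4 * p / 3) * 4 ^ p)
      ≤ (3 * p : ℝ) ^ ((4 * (p : ℝ)) / 3) * 4 ^ ((4 * (p : ℝ)) / 3) := by
        rw [← Real.rpow_natCast, ← Real.rpow_natCast (4 : ℝ)]
        have hbase :
            (2 * p + 1 : ℝ) ^ ((4 * p / 3 : ℕ) : ℝ) ≤ (3 * p) ^ ((4 * (p : ℝ)) / 3) :=
          (Real.rpow_le_rpow (by positivity) (by linarith) (by positivity)).trans
            (Real.rpow_le_rpow_of_exponent_le (by linarith) hexp)
        have hfour : (4 : ℝ) ^ (p : ℝ) ≤ 4 ^ ((4 * (p : ℝ)) / 3) :=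
          Real.rpow_le_rpow_of_exponent_le (by norm_num) (by linarith)
        gcongr
    _ = (12 * p) ^ ((4 * (p : ℝ)) / 3) := by
        rw [← Real.mul_rpow (by positivity) (by norm_num)]
        ring_nf

theorem card_fixedPointFree_cycleType_two_or_three_le {α : Type*} [Fintype α] [LinearOrder α] :
    Nat.card {σ : Perm α // (∀ i, σ i ≠ i) ∧ ∀ k ∈ σ.cycleType, k = 2 ∨ k = 3} ≤
      (Fintype.card α + 1) ^ (2 * Fintype.card α / 3) * 2 ^ Fintype.card α := by
  have hcyc (σ : Perm α) (h : (∀ i, σ i ≠ i) ∧ ∀ k ∈ σ.cycleType, k = 2 ∨ k = 3) :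
      HasCyclesOfLengthTwoOrThree σ :=
    hasCyclesOfLengthTwoOrThree_of_cycleType h.1 h.2
  calc _ ≤ Nat.card {f : α → Option α //
        #{i | (f i).isSome} ≤ 2 * Fintype.card α / 3} := by
        refine Nat.card_le_card_of_injective
          (fun σ ↦ ⟨encodeOffCycleMin σ.1, ?_⟩) fun σ τ h ↦ Subtype.ext ?_
        · have := three_mul_card_isSome_encodeOffCycleMin_le (hcyc σ σ.2)
          omega
        · exact eq_of_encodeOffCycleMin_eq (hcyc σ σ.2) (hcyc τ τ.2) (congrArg Subtype.val h)
    _ ≤ _ := by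
        rw [Nat.card_eq_fintype_card, Fintype.card_subtype]
        exact card_filter_card_isSome_le _

/-- The number of fixed-point-free permutations of `{1,…,2p}` all of whose cycles have
length 2 or 3 is at most `(Cp)^{4p/3}` for an absolute constant `C > 0`. -/
theorem stmt_13 :
    ∃ C : ℝ, 0 < C ∧ ∀ p : ℕ, 1 ≤ p →
      (Nat.card {σ : Equiv.Perm (Fin (2 * p)) //
          (∀ i, σ i ≠ i) ∧ ∀ k ∈ σ.cycleType, k = 2 ∨ k = 3} : ℝ) ≤
        (C * p) ^ ((4 * (p : ℝ)) / 3) := by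
  refine ⟨12, by norm_num, fun p hp ↦ ?_⟩
  have hcard := card_fixedPointFree_cycleType_two_or_three_le (α := Fin (2 * p))
  rw [Fintype.card_fin, ← mul_assoc, pow_mul] at hcard
  calc (_ : ℝ) ≤ ((2 * p + 1) ^ (4 * p / 3) * 4 ^ p : ℕ) := by exact_mod_cast hcard
    _ ≤ _ := by exact_mod_cast two_mul_add_one_pow_mul_four_pow_le hp
end

section
/- Let (g_n)_{n ∈ ℕ} be a sequence of independent real-valued random variables on a probability space (Ω, P), each with E[g_n] = 0, each satisfying the tail bound P(|g_n| ≥ ρ) ≤ C₀·exp(−c₀·ρ^γ) for all ρ ≥ 0, with common constants C₀, c₀ > 0 and exponent γ ∈ (0, 1]. Then there exists a constant C > 0 depending only on C₀, c₀ and γ such that for every integer p ≥ 1 and every finitely supported sequence (c_n) of complex numbers: E[ |Σ_n c_n·g_n|^{2p} ] ≤ (C·p)^{2p(2γ+3)/(3γ)} · ( Σ_n |c_n|² )^p. -/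
/-!
Bounding `|g|^k` by `∑ⱼ (j + 1)^k 𝟙{j ≤ |g|}` turns the tail bound into the moment bound
`|E g^k| ≤ (A (k + 2))^((k + 2)/γ)`. For real coefficients write `S = a gₙ + S'` with `gₙ`
independent of `S'` and expand `E S^m` binomially: the linear term vanishes since `gₙ` is centred,
and each term with `j ≥ 2` factors of `a gₙ` costs at most `2^(-j)` of the target
`‖a‖₂^m (B m)^((1/γ + 2/3) m)`, so induction on the support gives the bound. Complex coefficients
are split into real and imaginary parts, at the price of a factor `2^p`.
-/

open MeasureTheory ProbabilityTheory Finset Real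
open scoped ENNReal

theorem Real.rpow_mul_exp_neg_mul_le {b c x : ℝ} (hb : 0 < b) (hc : 0 < c) (hx : 0 ≤ x) :
    x ^ b * exp (-(c * x)) ≤ (b / c) ^ b := by
  have hcx : 0 ≤ c * x / b := by positivity
  have key : (c * x / b) ^ b ≤ exp (c * x - b) := by
    calc (c * x / b) ^ b ≤ exp (c * x / b - 1) ^ b := by
          gcongr; linarith [add_one_le_exp (c * x / b - 1)]
      _ = exp (c * x - b) := by rw [← exp_mul]; field_simp
  have hsplit : x ^ b = (b / c) ^ b * (c * x / b) ^ b := by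
    rw [← mul_rpow (by positivity) hcx]; congr 1; field_simp
  calc x ^ b * exp (-(c * x)) ≤ (b / c) ^ b * exp (c * x - b) * exp (-(c * x)) := by
        rw [hsplit]; gcongr
    _ = (b / c) ^ b * exp (-b) := by rw [mul_assoc, ← exp_add]; ring_nf
    _ ≤ (b / c) ^ b := mul_le_of_le_one_right (by positivity) (exp_le_one_iff.2 (by linarith))

section TailMoments

variable {Ω : Type*} [MeasurableSpace Ω] {μ : Measure Ω} {X : Ω → ℝ}

theorem lintegral_enorm_pow_le_tsum (hX : Measurable X) (k : ℕ) :
    ∫⁻ ω, ‖X ω‖ₑ ^ k ∂μ ≤ ∑' j : ℕ, ((j : ℝ≥0∞) + 1) ^ k * μ {ω | (j : ℝ) ≤ |X ω|} := by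
  have hmeas (j : ℕ) : MeasurableSet {ω | (j : ℝ) ≤ |X ω|} :=
    measurableSet_le measurable_const hX.abs
  calc ∫⁻ ω, ‖X ω‖ₑ ^ k ∂μ
      ≤ ∫⁻ ω, ∑' j : ℕ, {ω | (j : ℝ) ≤ |X ω|}.indicator (fun _ ↦ ((j : ℝ≥0∞) + 1) ^ k) ω ∂μ := by
        refine lintegral_mono fun ω ↦ ?_
        set j := ⌊|X ω|⌋₊
        have hj : ω ∈ {ω | (j : ℝ) ≤ |X ω|} := Nat.floor_le (abs_nonneg (X ω))
        calc ‖X ω‖ₑ ^ k ≤ ((j : ℝ≥0∞) + 1) ^ k := by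
              gcongr
              rw [enorm_eq_ofReal_abs, ← ENNReal.ofReal_natCast, ← ENNReal.ofReal_one,
                ← ENNReal.ofReal_add (by positivity) zero_le_one]
              exact ENNReal.ofReal_le_ofReal (Nat.lt_floor_add_one _).le
          _ = {ω | (j : ℝ) ≤ |X ω|}.indicator (fun _ ↦ ((j : ℝ≥0∞) + 1) ^ k) ω :=
              (Set.indicator_of_mem hj (fun _ ↦ ((j : ℝ≥0∞) + 1) ^ k)).symm
          _ ≤ _ := ENNReal.le_tsum j
    _ = ∑' j : ℕ, ((j : ℝ≥0∞) + 1) ^ k * μ {ω | (j : ℝ) ≤ |X ω|} := by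
        rw [lintegral_tsum fun j ↦ (measurable_const.indicator (hmeas j)).aemeasurable]
        simp_rw [lintegral_indicator_const (hmeas _)]

theorem pow_mul_tail_le {C₀ c₀ γ : ℝ} (hC₀ : 0 ≤ C₀) (hc₀ : 0 < c₀) (hγ0 : 0 < γ) (hγ1 : γ ≤ 1)
    (j k : ℕ) :
    ((j : ℝ) + 1) ^ k * (C₀ * exp (-c₀ * (j : ℝ) ^ γ)) ≤
      C₀ * exp c₀ * (((k : ℝ) + 2) / γ / c₀) ^ (((k : ℝ) + 2) / γ) * (1 / ((j : ℝ) + 1) ^ 2) := by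
  -- subadditivity of `ρ ↦ ρ ^ γ` shifts the tail from `j` to `j + 1` at the cost of `exp c₀`
  have hshift : exp (-c₀ * (j : ℝ) ^ γ) ≤ exp c₀ * exp (-(c₀ * ((j : ℝ) + 1) ^ γ)) := by
    have := rpow_add_le_add_rpow j.cast_nonneg zero_le_one hγ0.le hγ1
    rw [one_rpow] at this
    rw [← exp_add]
    gcongr
    nlinarith
  have hpeak : ((j : ℝ) + 1) ^ (k + 2) * exp (-(c₀ * ((j : ℝ) + 1) ^ γ)) ≤
      (((k : ℝ) + 2) / γ / c₀) ^ (((k : ℝ) + 2) / γ) := by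
    have hpow : (((j : ℝ) + 1) ^ γ) ^ (((k : ℝ) + 2) / γ) = ((j : ℝ) + 1) ^ (k + 2) := by
      rw [← rpow_mul (by positivity), mul_div_cancel₀ _ hγ0.ne']
      exact_mod_cast rpow_natCast ((j : ℝ) + 1) (k + 2)
    rw [← hpow]
    exact rpow_mul_exp_neg_mul_le (by positivity) hc₀ (by positivity)
  rw [mul_one_div, le_div_iff₀ (by positivity)]
  calc ((j : ℝ) + 1) ^ k * (C₀ * exp (-c₀ * (j : ℝ) ^ γ)) * ((j : ℝ) + 1) ^ 2
      = C₀ * (((j : ℝ) + 1) ^ (k + 2) * exp (-c₀ * (j : ℝ) ^ γ)) := by ring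
    _ ≤ C₀ * (((j : ℝ) + 1) ^ (k + 2) * (exp c₀ * exp (-(c₀ * ((j : ℝ) + 1) ^ γ)))) := by
        gcongr
    _ = C₀ * exp c₀ * (((j : ℝ) + 1) ^ (k + 2) * exp (-(c₀ * ((j : ℝ) + 1) ^ γ))) := by ring
    _ ≤ C₀ * exp c₀ * (((k : ℝ) + 2) / γ / c₀) ^ (((k : ℝ) + 2) / γ) := by gcongr

theorem lintegral_enorm_pow_le_of_tail {C₀ c₀ γ : ℝ} (hX : Measurable X) (hC₀ : 0 ≤ C₀)
    (hc₀ : 0 < c₀) (hγ0 : 0 < γ) (hγ1 : γ ≤ 1)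
    (htail : ∀ ρ : ℝ, 0 ≤ ρ → μ {ω | ρ ≤ |X ω|} ≤ ENNReal.ofReal (C₀ * exp (-c₀ * ρ ^ γ)))
    (k : ℕ) :
    ∫⁻ ω, ‖X ω‖ₑ ^ k ∂μ ≤
      ENNReal.ofReal (2 * C₀ * exp c₀ * (((k : ℝ) + 2) / γ / c₀) ^ (((k : ℝ) + 2) / γ)) := by
  set M := C₀ * exp c₀ * (((k : ℝ) + 2) / γ / c₀) ^ (((k : ℝ) + 2) / γ)
  have hM : 0 ≤ M := by positivity
  have hsum : HasSum (fun j : ℕ ↦ M * (1 / ((j : ℝ) + 1) ^ 2)) (M * (π ^ 2 / 6)) := by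
    have := (hasSum_nat_add_iff' 1).2 hasSum_zeta_two
    simp only [Finset.range_one, Finset.sum_singleton, Nat.cast_zero, Nat.cast_add,
      Nat.cast_one] at this
    simpa using this.mul_left M
  calc ∫⁻ ω, ‖X ω‖ₑ ^ k ∂μ
      ≤ ∑' j : ℕ, ((j : ℝ≥0∞) + 1) ^ k * μ {ω | (j : ℝ) ≤ |X ω|} :=
        lintegral_enorm_pow_le_tsum hX k
    _ ≤ ∑' j : ℕ, ENNReal.ofReal (M * (1 / ((j : ℝ) + 1) ^ 2)) := by
        refine ENNReal.tsum_le_tsum fun j ↦ ?_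
        have hcast : ((j : ℝ≥0∞) + 1) ^ k = ENNReal.ofReal (((j : ℝ) + 1) ^ k) := by
          rw [ENNReal.ofReal_pow (by positivity)]; norm_cast
        rw [hcast]
        calc _ ≤ ENNReal.ofReal (((j : ℝ) + 1) ^ k) *
              ENNReal.ofReal (C₀ * exp (-c₀ * (j : ℝ) ^ γ)) := by
              gcongr
              exact htail j j.cast_nonneg
          _ ≤ _ := by
              rw [← ENNReal.ofReal_mul (by positivity)]
              exact ENNReal.ofReal_le_ofReal (pow_mul_tail_le hC₀ hc₀ hγ0 hγ1 j k)
    _ = ENNReal.ofReal (M * (π ^ 2 / 6)) := by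
        rw [← ENNReal.ofReal_tsum_of_nonneg (fun j ↦ by positivity) hsum.summable, hsum.tsum_eq]
    _ ≤ ENNReal.ofReal (2 * M) := by
        refine ENNReal.ofReal_le_ofReal ?_
        have : π ^ 2 / 6 ≤ 2 := by nlinarith [pi_lt_d2, pi_pos]
        nlinarith
    _ = _ := by simp only [M, mul_assoc]

noncomputable def momentGrowth (A γ : ℝ) (k : ℕ) : ℝ := (A * ((k : ℝ) + 2)) ^ (((k : ℝ) + 2) / γ)

noncomputable def tailMomentConst (C₀ c₀ γ : ℝ) : ℝ := (1 + 2 * C₀ * exp c₀) * (1 + 1 / γ / c₀)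

theorem one_le_tailMomentConst {C₀ c₀ γ : ℝ} (hC₀ : 0 ≤ C₀) (hc₀ : 0 < c₀) (hγ : 0 < γ) :
    1 ≤ tailMomentConst C₀ c₀ γ := by
  have : 0 ≤ 2 * C₀ * exp c₀ := by positivity
  have : 0 ≤ 1 / γ / c₀ := by positivity
  unfold tailMomentConst
  nlinarith

theorem tail_moment_le_momentGrowth {C₀ c₀ γ : ℝ} (hC₀ : 0 ≤ C₀) (hc₀ : 0 < c₀) (hγ0 : 0 < γ)
    (hγ2 : γ ≤ 2) (k : ℕ) :
    2 * C₀ * exp c₀ * (((k : ℝ) + 2) / γ / c₀) ^ (((k : ℝ) + 2) / γ) ≤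
      momentGrowth (tailMomentConst C₀ c₀ γ) γ k := by
  set K := 1 + 2 * C₀ * exp c₀
  have hK : 1 ≤ K := le_add_of_nonneg_right (by positivity)
  have he : 1 ≤ ((k : ℝ) + 2) / γ := by rw [le_div_iff₀ hγ0]; linarith [k.cast_nonneg (α := ℝ)]
  calc 2 * C₀ * exp c₀ * (((k : ℝ) + 2) / γ / c₀) ^ (((k : ℝ) + 2) / γ)
      ≤ K ^ (((k : ℝ) + 2) / γ) * (((k : ℝ) + 2) / γ / c₀) ^ (((k : ℝ) + 2) / γ) := by
        gcongr
        exact (le_add_of_nonneg_left zero_le_one).trans (self_le_rpow_of_one_le hK he)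
    _ = (K * (((k : ℝ) + 2) / γ / c₀)) ^ (((k : ℝ) + 2) / γ) := by
        rw [mul_rpow (by positivity) (by positivity)]
    _ ≤ momentGrowth (tailMomentConst C₀ c₀ γ) γ k := by
        refine rpow_le_rpow (by positivity) ?_ (by positivity)
        rw [tailMomentConst, mul_assoc]
        refine mul_le_mul_of_nonneg_left ?_ (by positivity)
        have : ((k : ℝ) + 2) / γ / c₀ = 1 / γ / c₀ * ((k : ℝ) + 2) := by ring
        rw [this]
        exact mul_le_mul_of_nonneg_right (le_add_of_nonneg_left zero_le_one) (by positivity)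

section

variable {C₀ c₀ γ : ℝ} (hX : Measurable X) (hC₀ : 0 ≤ C₀) (hc₀ : 0 < c₀) (hγ0 : 0 < γ)
  (hγ1 : γ ≤ 1)
  (htail : ∀ ρ : ℝ, 0 ≤ ρ → μ {ω | ρ ≤ |X ω|} ≤ ENNReal.ofReal (C₀ * exp (-c₀ * ρ ^ γ)))
include hX hC₀ hc₀ hγ0 hγ1 htail

theorem lintegral_enorm_pow_le_momentGrowth (k : ℕ) :
    ∫⁻ ω, ‖X ω ^ k‖ₑ ∂μ ≤ ENNReal.ofReal (momentGrowth (tailMomentConst C₀ c₀ γ) γ k) := by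
  simp_rw [enorm_pow]
  exact (lintegral_enorm_pow_le_of_tail hX hC₀ hc₀ hγ0 hγ1 htail k).trans
    (ENNReal.ofReal_le_ofReal (tail_moment_le_momentGrowth hC₀ hc₀ hγ0 (by linarith) k))

theorem integrable_pow_of_tail (k : ℕ) : Integrable (fun ω ↦ X ω ^ k) μ :=
  ⟨(hX.pow_const k).aestronglyMeasurable,
    (lintegral_enorm_pow_le_momentGrowth hX hC₀ hc₀ hγ0 hγ1 htail k).trans_lt
      ENNReal.ofReal_lt_top⟩

theorem abs_integral_pow_le_of_tail (k : ℕ) :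
    |∫ ω, X ω ^ k ∂μ| ≤ momentGrowth (tailMomentConst C₀ c₀ γ) γ k := by
  have hA := one_le_tailMomentConst hC₀ hc₀ hγ0
  rw [← ENNReal.ofReal_le_ofReal_iff (by unfold momentGrowth; positivity), ← enorm_eq_ofReal_abs]
  exact (enorm_integral_le_lintegral_enorm _).trans
    (lintegral_enorm_pow_le_momentGrowth hX hC₀ hc₀ hγ0 hγ1 htail k)

end

end TailMoments

theorem Nat.choose_le_exp_one_mul_div_pow (m j : ℕ) :
    (m.choose j : ℝ) ≤ (exp 1 * m / j) ^ j := by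
  rcases j.eq_zero_or_pos with rfl | hj
  · simp
  have hj' : (0 : ℝ) < j := by exact_mod_cast hj
  have hfac : (j : ℝ) ^ j / j.factorial ≤ exp 1 ^ j := by
    simpa [← exp_nat_mul] using pow_div_factorial_le_exp (j : ℝ) hj'.le j
  calc (m.choose j : ℝ) ≤ (m : ℝ) ^ j / j.factorial := Nat.choose_le_pow_div j m
    _ = (m / j : ℝ) ^ j * ((j : ℝ) ^ j / j.factorial) := by
        rw [div_pow]; field_simp
    _ ≤ (m / j : ℝ) ^ j * exp 1 ^ j := by gcongr
    _ = (exp 1 * m / j) ^ j := by rw [← mul_pow]; ring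

section GrowthConstants

variable {A B γ : ℝ} {m j : ℕ}

theorem exp_one_mul_div_mul_rpow_le (hγ0 : 0 < γ) (hγ1 : γ ≤ 1) (hA : 0 < A)
    (hB : 8 * exp 1 * A ≤ B) (hj : 0 < j) (hjm : j ≤ m) :
    exp 1 * m / j * (2 * A * j) ^ (1 / γ) ≤ 1 / 4 * (B * m) ^ (1 / γ) := by
  have hj' : (0 : ℝ) < j := by exact_mod_cast hj
  have hjm' : (j : ℝ) ≤ m := by exact_mod_cast hjm
  have hB0 : 0 < B := by have := exp_pos 1; nlinarith
  have hm0 : (0 : ℝ) < m := hj'.trans_le hjm'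
  have hBm : 0 < B * m := mul_pos hB0 hm0
  set y := 2 * A * j / (B * m)
  have hy : y ≤ 1 := by
    rw [div_le_one hBm]
    have := add_one_le_exp 1
    exact mul_le_mul (by nlinarith) hjm' hj'.le hB0.le
  calc exp 1 * m / j * (2 * A * j) ^ (1 / γ)
      = exp 1 * m / j * (y ^ (1 / γ) * (B * m) ^ (1 / γ)) := by
        rw [← mul_rpow (by positivity) hBm.le, div_mul_cancel₀ _ hBm.ne']
    _ ≤ exp 1 * m / j * (y * (B * m) ^ (1 / γ)) := by
        gcongr
        calc y ^ (1 / γ) ≤ y ^ (1 : ℝ) :=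
              rpow_le_rpow_of_exponent_ge (by positivity) hy (by rw [le_div_iff₀ hγ0]; linarith)
          _ = y := rpow_one y
    _ = 2 * exp 1 * A / B * (B * m) ^ (1 / γ) := by
        simp only [y]; field_simp [hm0.ne']
    _ ≤ 1 / 4 * (B * m) ^ (1 / γ) := by
        refine mul_le_mul_of_nonneg_right ?_ (by positivity)
        rw [div_le_iff₀ hB0]
        linarith

theorem two_mul_mul_rpow_two_div_le (hγ0 : 0 < γ) (hA : 1 ≤ A) (hB : (4 * A) ^ (3 / γ) ≤ B)
    (hj : 1 ≤ j) (hjm : j ≤ m) :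
    (2 * A * j) ^ (2 / γ) ≤ (B * m) ^ (2 * (j : ℝ) / 3) := by
  have hm : (1 : ℝ) ≤ m := by exact_mod_cast hj.trans hjm
  have hstep : 2 * A * j ≤ (4 * A) ^ j := by
    calc 2 * A * j ≤ (2 * A) ^ j * 2 ^ j := by
          gcongr
          · exact le_self_pow₀ (by linarith) (by omega)
          · exact_mod_cast Nat.lt_two_pow_self.le
      _ = (4 * A) ^ j := by rw [← mul_pow]; ring
  calc (2 * A * j) ^ (2 / γ) ≤ ((4 * A) ^ j) ^ (2 / γ) := by gcongr
    _ = ((4 * A) ^ (3 / γ)) ^ (2 * (j : ℝ) / 3) := by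
        rw [← rpow_natCast, ← rpow_mul (by positivity), ← rpow_mul (by positivity)]
        congr 1
        field_simp
    _ ≤ (B * m) ^ (2 * (j : ℝ) / 3) := by
        gcongr
        exact hB.trans (le_mul_of_one_le_right ((by positivity : (0:ℝ) ≤ _).trans hB) hm)

/-- The extra exponent `2/3` absorbs the factor `(2 A j)^(2/γ)` coming from the shift `k + 2` in
`momentGrowth`. -/
theorem choose_mul_momentGrowth_mul_le (hγ0 : 0 < γ) (hγ1 : γ ≤ 1) (hA : 1 ≤ A)
    (hB₁ : 8 * exp 1 * A ≤ B) (hB₂ : (4 * A) ^ (3 / γ) ≤ B) (hj : 2 ≤ j) (hjm : j ≤ m) :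
    m.choose j * momentGrowth A γ j * (B * (m - j : ℕ)) ^ ((1 / γ + 2 / 3) * (m - j : ℕ)) ≤
      (1 / 2) ^ j * (B * m) ^ ((1 / γ + 2 / 3) * m) := by
  have hj' : (2 : ℝ) ≤ j := by exact_mod_cast hj
  have hjm' : (j : ℝ) ≤ m := by exact_mod_cast hjm
  have hB0 : 0 < B := by have := exp_pos 1; nlinarith
  have hBm : 0 < B * m := mul_pos hB0 (by linarith)
  have hw : momentGrowth A γ j ≤ ((2 * A * j) ^ (1 / γ)) ^ j * (2 * A * j) ^ (2 / γ) := by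
    calc momentGrowth A γ j ≤ (2 * A * j) ^ (((j : ℝ) + 2) / γ) := by
          unfold momentGrowth
          refine rpow_le_rpow (by positivity) ?_ (by positivity)
          nlinarith
      _ = ((2 * A * j) ^ (1 / γ)) ^ j * (2 * A * j) ^ (2 / γ) := by
          rw [← rpow_natCast, ← rpow_mul (by positivity), ← rpow_add (by positivity)]
          congr 1
          ring
  have hcw : m.choose j * momentGrowth A γ j ≤ (1 / 4) ^ j * (B * m) ^ ((1 / γ + 2 / 3) * j) := by
    calc m.choose j * momentGrowth A γ j
        ≤ (exp 1 * m / j) ^ j * (((2 * A * j) ^ (1 / γ)) ^ j * (2 * A * j) ^ (2 / γ)) :=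
          mul_le_mul (Nat.choose_le_exp_one_mul_div_pow m j) hw
            (by unfold momentGrowth; positivity) (by positivity)
      _ = (exp 1 * m / j * (2 * A * j) ^ (1 / γ)) ^ j * (2 * A * j) ^ (2 / γ) := by
          rw [mul_pow]; ring
      _ ≤ (1 / 4 * (B * m) ^ (1 / γ)) ^ j * (B * m) ^ (2 * (j : ℝ) / 3) :=
          mul_le_mul (pow_le_pow_left₀ (by positivity)
              (exp_one_mul_div_mul_rpow_le hγ0 hγ1 (by linarith) hB₁ (by omega) hjm) j)
            (two_mul_mul_rpow_two_div_le hγ0 hA hB₂ (by omega) hjm) (by positivity) (by positivity)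
      _ = (1 / 4) ^ j * (B * m) ^ ((1 / γ + 2 / 3) * j) := by
          rw [mul_pow, ← rpow_natCast ((B * m) ^ (1 / γ)), ← rpow_mul hBm.le, mul_assoc,
            ← rpow_add hBm]
          ring_nf
  have hrest : (B * (m - j : ℕ)) ^ ((1 / γ + 2 / 3) * (m - j : ℕ)) ≤
      (B * m) ^ ((1 / γ + 2 / 3) * (m - j : ℕ)) := by
    gcongr
    exact_mod_cast Nat.sub_le m j
  calc m.choose j * momentGrowth A γ j * (B * (m - j : ℕ)) ^ ((1 / γ + 2 / 3) * (m - j : ℕ))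
      ≤ (1 / 4) ^ j * (B * m) ^ ((1 / γ + 2 / 3) * j) *
          (B * m) ^ ((1 / γ + 2 / 3) * (m - j : ℕ)) :=
        mul_le_mul hcw hrest (by positivity) (by positivity)
    _ = (1 / 4) ^ j * (B * m) ^ ((1 / γ + 2 / 3) * m) := by
        rw [mul_assoc, ← rpow_add hBm, Nat.cast_sub hjm]
        ring_nf
    _ ≤ (1 / 2) ^ j * (B * m) ^ ((1 / γ + 2 / 3) * m) := by
        gcongr
        norm_num

end GrowthConstants

theorem abs_mul_mul_choose_le {x s T u v : ℝ} {w R : ℕ → ℝ} {m k : ℕ} (hkm : k ≤ m)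
    (hx : 0 ≤ x) (hs : 0 ≤ s) (hxT : x ≤ T) (hsT : s ≤ T) (hu : |u| ≤ x ^ (k + 2) * w (k + 2))
    (hv : |v| ≤ s ^ (m - k) * R (m - k)) (hR : 0 ≤ R (m + 2))
    (hwR : (m + 2).choose (k + 2) * w (k + 2) * R (m - k) ≤ (1 / 2) ^ (k + 2) * R (m + 2)) :
    |u * v * (m + 2).choose (k + 2)| ≤ (1 / 2) ^ (k + 2) * (x ^ 2 * T ^ m * R (m + 2)) := by
  have hxs : x ^ (k + 2) * s ^ (m - k) ≤ x ^ 2 * T ^ m := by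
    calc x ^ (k + 2) * s ^ (m - k) = x ^ 2 * (x ^ k * s ^ (m - k)) := by ring
      _ ≤ x ^ 2 * (T ^ k * T ^ (m - k)) := by
          have := hx.trans hxT
          gcongr
      _ = x ^ 2 * T ^ m := by rw [← pow_add, Nat.add_sub_cancel' hkm]
  rw [abs_mul, abs_mul, Nat.abs_cast]
  calc |u| * |v| * ((m + 2).choose (k + 2) : ℝ)
      ≤ (x ^ (k + 2) * w (k + 2)) * (s ^ (m - k) * R (m - k)) * (m + 2).choose (k + 2) :=
        mul_le_mul_of_nonneg_right (mul_le_mul hu hv (abs_nonneg _) ((abs_nonneg _).trans hu))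
          (Nat.cast_nonneg _)
    _ = s ^ (m - k) * (x ^ (k + 2) * ((m + 2).choose (k + 2) * w (k + 2) * R (m - k))) := by
        ring
    _ ≤ s ^ (m - k) * (x ^ (k + 2) * ((1 / 2) ^ (k + 2) * R (m + 2))) := by gcongr
    _ = (1 / 2) ^ (k + 2) * R (m + 2) * (x ^ (k + 2) * s ^ (m - k)) := by ring
    _ ≤ (1 / 2) ^ (k + 2) * R (m + 2) * (x ^ 2 * T ^ m) := by gcongr
    _ = (1 / 2) ^ (k + 2) * (x ^ 2 * T ^ m * R (m + 2)) := by ring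

namespace ProbabilityTheory.IndepFun

variable {Ω : Type*} [MeasurableSpace Ω] {μ : Measure Ω} {X Y : Ω → ℝ}

theorem pow_pow (hXY : IndepFun X Y μ) (j l : ℕ) :
    IndepFun (fun ω ↦ X ω ^ j) (fun ω ↦ Y ω ^ l) μ :=
  hXY.comp (measurable_id.pow_const j) (measurable_id.pow_const l)

variable (hXY : IndepFun X Y μ) (hX : ∀ j : ℕ, Integrable (fun ω ↦ X ω ^ j) μ)
  (hY : ∀ j : ℕ, Integrable (fun ω ↦ Y ω ^ j) μ)
include hXY hX hY

theorem integrable_pow_mul_pow (j l : ℕ) : Integrable (fun ω ↦ X ω ^ j * Y ω ^ l) μ :=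
  (hXY.pow_pow j l).integrable_mul (hX j) (hY l)

theorem integrable_add_pow (m : ℕ) : Integrable (fun ω ↦ (X ω + Y ω) ^ m) μ := by
  simp_rw [add_pow]
  exact integrable_finsetSum _ fun j _ ↦ (integrable_pow_mul_pow hXY hX hY j (m - j)).mul_const _

theorem integral_add_pow (m : ℕ) :
    ∫ ω, (X ω + Y ω) ^ m ∂μ =
      ∑ j ∈ range (m + 1), (∫ ω, X ω ^ j ∂μ) * (∫ ω, Y ω ^ (m - j) ∂μ) * m.choose j := by
  simp_rw [add_pow]
  rw [integral_finsetSum _ fun j _ ↦ (integrable_pow_mul_pow hXY hX hY j (m - j)).mul_const _]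
  refine sum_congr rfl fun j _ ↦ ?_
  rw [integral_mul_const]
  congr 1
  exact (hXY.pow_pow j (m - j)).integral_mul_eq_mul_integral (hX j).1 (hY _).1

theorem abs_integral_add_pow_le [IsProbabilityMeasure μ] (hX₁ : ∫ ω, X ω ∂μ = 0) {x s : ℝ}
    (hx : 0 ≤ x) (hs : 0 ≤ s) {w R : ℕ → ℝ} (hXm : ∀ j, 2 ≤ j → |∫ ω, X ω ^ j ∂μ| ≤ x ^ j * w j)
    (hYm : ∀ j, |∫ ω, Y ω ^ j ∂μ| ≤ s ^ j * R j) (hR : ∀ m, 0 ≤ R m)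
    (hwR : ∀ m j, 2 ≤ j → j ≤ m → m.choose j * w j * R (m - j) ≤ (1 / 2) ^ j * R m) (m : ℕ) :
    |∫ ω, (X ω + Y ω) ^ m ∂μ| ≤ √(x ^ 2 + s ^ 2) ^ m * R m := by
  set T := √(x ^ 2 + s ^ 2)
  have hT : T ^ 2 = x ^ 2 + s ^ 2 := sq_sqrt (by positivity)
  have hsT : s ≤ T := le_sqrt_of_sq_le (by nlinarith)
  have hxT : x ≤ T := le_sqrt_of_sq_le (by nlinarith)
  match m with
  | 0 => simpa using hYm 0
  | 1 =>
    simp_rw [pow_one]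
    rw [integral_add (by simpa using hX 1) (by simpa using hY 1), hX₁, zero_add]
    exact (by simpa using hYm 1 : |∫ ω, Y ω ∂μ| ≤ s * R 1).trans
      (by simpa using mul_le_mul_of_nonneg_right hsT (hR 1))
  | m + 2 =>
    rw [integral_add_pow hXY hX hY, sum_range_succ', sum_range_succ']
    simp only [zero_add, pow_one, hX₁, zero_mul, add_zero, pow_zero, integral_const,
      smul_eq_mul, probReal_univ, one_mul, mul_one, Nat.sub_zero, Nat.choose_zero_right,
      Nat.cast_one]
    have hterm : ∀ k ∈ range (m + 1),
        |(∫ ω, X ω ^ (k + 1 + 1) ∂μ) * (∫ ω, Y ω ^ (m + 2 - (k + 1 + 1)) ∂μ) *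
          ((m + 2).choose (k + 1 + 1) : ℝ)| ≤ (1 / 2) ^ (k + 2) * (x ^ 2 * T ^ m * R (m + 2)) := by
      intro k hk
      have hkm : k ≤ m := Nat.lt_succ_iff.1 (mem_range.1 hk)
      rw [show m + 2 - (k + 1 + 1) = m - k by omega]
      refine abs_mul_mul_choose_le hkm hx hs hxT hsT (hXm (k + 2) le_add_self) (hYm (m - k))
        (hR _) ?_
      simpa only [Nat.add_sub_add_right] using hwR (m + 2) (k + 2) le_add_self (by omega)
    have hgeom : ∑ k ∈ range (m + 1), (1 / 2 : ℝ) ^ (k + 2) ≤ 1 := by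
      have := sum_geometric_two_le (m + 1)
      simp_rw [pow_add, ← sum_mul]
      nlinarith
    have hlast : |∫ ω, Y ω ^ (m + 2) ∂μ| ≤ s ^ 2 * T ^ m * R (m + 2) := by
      refine (hYm (m + 2)).trans (mul_le_mul_of_nonneg_right ?_ (hR _))
      rw [pow_add, mul_comm]
      gcongr
    calc _ ≤ ∑ k ∈ range (m + 1),
          |(∫ ω, X ω ^ (k + 1 + 1) ∂μ) * (∫ ω, Y ω ^ (m + 2 - (k + 1 + 1)) ∂μ) *
            ((m + 2).choose (k + 1 + 1) : ℝ)| + |∫ ω, Y ω ^ (m + 2) ∂μ| :=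
          (abs_add_le _ _).trans (add_le_add_left (abs_sum_le_sum_abs _ _) _)
      _ ≤ ∑ k ∈ range (m + 1), (1 / 2) ^ (k + 2) * (x ^ 2 * T ^ m * R (m + 2)) +
          s ^ 2 * T ^ m * R (m + 2) := add_le_add (sum_le_sum hterm) hlast
      _ ≤ x ^ 2 * T ^ m * R (m + 2) + s ^ 2 * T ^ m * R (m + 2) := by
          rw [← sum_mul]
          linarith [mul_le_of_le_one_left
            (mul_nonneg (mul_nonneg (sq_nonneg x) (pow_nonneg (hx.trans hxT) m)) (hR (m + 2)))
            hgeom]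
      _ = T ^ (m + 2) * R (m + 2) := by rw [pow_add, hT]; ring

end ProbabilityTheory.IndepFun

section SumMoments

variable {Ω ι : Type*} [MeasurableSpace Ω] {μ : Measure Ω} {g : ι → Ω → ℝ}

theorem ProbabilityTheory.iIndepFun.indepFun_mul_finsetSum (hindep : iIndepFun g μ)
    (hmeas : ∀ i, Measurable (g i)) (a : ι → ℝ) {F : Finset ι} {n : ι} (hn : n ∉ F) :
    IndepFun (fun ω ↦ a n * g n ω) (fun ω ↦ ∑ i ∈ F, a i * g i ω) μ := by
  have h := (hindep.comp (fun i x ↦ a i * x) fun i ↦ measurable_const.mul measurable_id)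
    |>.indepFun_finsetSum_of_notMem (fun i ↦ measurable_const.mul (hmeas i)) hn
  convert h.symm using 1 <;> ext ω <;> simp [Finset.sum_apply]

theorem integrable_sum_mul_pow [IsFiniteMeasure μ] (hindep : iIndepFun g μ)
    (hmeas : ∀ i, Measurable (g i)) (hint : ∀ i (j : ℕ), Integrable (fun ω ↦ g i ω ^ j) μ)
    (a : ι → ℝ) (F : Finset ι) (m : ℕ) :
    Integrable (fun ω ↦ (∑ i ∈ F, a i * g i ω) ^ m) μ := by
  classical
  induction F using Finset.induction_on generalizing m with
  | empty => simp
  | insert n F hn ih =>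
    simp_rw [sum_insert hn]
    refine (hindep.indepFun_mul_finsetSum hmeas a hn).integrable_add_pow (fun j ↦ ?_) ih m
    simp_rw [mul_pow]
    exact (hint n j).const_mul _

theorem abs_integral_sum_mul_pow_le [IsProbabilityMeasure μ] (hindep : iIndepFun g μ)
    (hmeas : ∀ i, Measurable (g i)) (hint : ∀ i (j : ℕ), Integrable (fun ω ↦ g i ω ^ j) μ)
    (hcent : ∀ i, ∫ ω, g i ω ∂μ = 0) {w R : ℕ → ℝ}
    (hmom : ∀ i j, 2 ≤ j → |∫ ω, g i ω ^ j ∂μ| ≤ w j) (hR0 : 1 ≤ R 0) (hR : ∀ m, 0 ≤ R m)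
    (hwR : ∀ m j, 2 ≤ j → j ≤ m → m.choose j * w j * R (m - j) ≤ (1 / 2) ^ j * R m)
    (a : ι → ℝ) (F : Finset ι) (m : ℕ) :
    |∫ ω, (∑ i ∈ F, a i * g i ω) ^ m ∂μ| ≤ √(∑ i ∈ F, a i ^ 2) ^ m * R m := by
  classical
  induction F using Finset.induction_on generalizing m with
  | empty => rcases m with _ | m <;> simp [hR0]
  | insert n F hn ih =>
    have hX (j : ℕ) : Integrable (fun ω ↦ (a n * g n ω) ^ j) μ := by
      simp_rw [mul_pow]; exact (hint n j).const_mul _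
    have hXm (j : ℕ) (hj : 2 ≤ j) : |∫ ω, (a n * g n ω) ^ j ∂μ| ≤ |a n| ^ j * w j := by
      simp_rw [mul_pow]
      rw [integral_const_mul, abs_mul, abs_pow]
      gcongr
      exact hmom n j hj
    simp_rw [sum_insert hn]
    rw [← sq_abs (a n), ← sq_sqrt (sum_nonneg fun i _ ↦ sq_nonneg (a i) : 0 ≤ ∑ i ∈ F, a i ^ 2)]
    exact (hindep.indepFun_mul_finsetSum hmeas a hn).abs_integral_add_pow_le hX
      (integrable_sum_mul_pow hindep hmeas hint a F) (by rw [integral_const_mul, hcent, mul_zero])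
      (abs_nonneg _) (sqrt_nonneg _) hXm ih hR hwR m

end SumMoments

theorem Complex.norm_pow_two_mul_le (z : ℂ) (p : ℕ) :
    ‖z‖ ^ (2 * p) ≤ 2 ^ (p - 1) * (z.re ^ (2 * p) + z.im ^ (2 * p)) := by
  rw [pow_mul, pow_mul, pow_mul, Complex.sq_norm, Complex.normSq_apply, ← sq, ← sq]
  exact add_pow_le (sq_nonneg _) (sq_nonneg _) p

section ComplexCoefficients

variable {Ω ι : Type*} [MeasurableSpace Ω] {μ : Measure Ω} [IsProbabilityMeasure μ]
  {g : ι → Ω → ℝ}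

theorem integral_norm_sum_mul_pow_le (hindep : iIndepFun g μ)
    (hmeas : ∀ i, Measurable (g i)) (hint : ∀ i (j : ℕ), Integrable (fun ω ↦ g i ω ^ j) μ)
    (hcent : ∀ i, ∫ ω, g i ω ∂μ = 0) {w R : ℕ → ℝ}
    (hmom : ∀ i j, 2 ≤ j → |∫ ω, g i ω ^ j ∂μ| ≤ w j) (hR0 : 1 ≤ R 0) (hR : ∀ m, 0 ≤ R m)
    (hwR : ∀ m j, 2 ≤ j → j ≤ m → m.choose j * w j * R (m - j) ≤ (1 / 2) ^ j * R m)
    (c : ι → ℂ) (F : Finset ι) {p : ℕ} (hp : 0 < p) :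
    ∫ ω, ‖∑ i ∈ F, c i * (g i ω : ℂ)‖ ^ (2 * p) ∂μ ≤
      2 ^ p * (∑ i ∈ F, ‖c i‖ ^ 2) ^ p * R (2 * p) := by
  set b := (∑ i ∈ F, ‖c i‖ ^ 2) ^ p * R (2 * p)
  have hpart (a : ι → ℝ) (ha : ∀ i, |a i| ≤ ‖c i‖) :
      ∫ ω, (∑ i ∈ F, a i * g i ω) ^ (2 * p) ∂μ ≤ b := by
    refine (le_abs_self _).trans <| (abs_integral_sum_mul_pow_le hindep hmeas hint hcent hmom
      hR0 hR hwR a F (2 * p)).trans (mul_le_mul_of_nonneg_right ?_ (hR _))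
    rw [pow_mul, sq_sqrt (by positivity)]
    refine pow_le_pow_left₀ (by positivity) (sum_le_sum fun i _ ↦ ?_) p
    exact sq_le_sq' (abs_le.1 (ha i)).1 (abs_le.1 (ha i)).2
  have hpt (ω : Ω) : ‖∑ i ∈ F, c i * (g i ω : ℂ)‖ ^ (2 * p) ≤ 2 ^ (p - 1) *
      ((∑ i ∈ F, (c i).re * g i ω) ^ (2 * p) + (∑ i ∈ F, (c i).im * g i ω) ^ (2 * p)) := by
    simpa [Complex.re_sum, Complex.im_sum] using
      Complex.norm_pow_two_mul_le (∑ i ∈ F, c i * (g i ω : ℂ)) p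
  have hre := integrable_sum_mul_pow hindep hmeas hint (fun i ↦ (c i).re) F (2 * p)
  have him := integrable_sum_mul_pow hindep hmeas hint (fun i ↦ (c i).im) F (2 * p)
  calc ∫ ω, ‖∑ i ∈ F, c i * (g i ω : ℂ)‖ ^ (2 * p) ∂μ
      ≤ ∫ ω, 2 ^ (p - 1) *
          ((∑ i ∈ F, (c i).re * g i ω) ^ (2 * p) + (∑ i ∈ F, (c i).im * g i ω) ^ (2 * p)) ∂μ :=
        integral_mono_of_nonneg (.of_forall fun ω ↦ by positivity)
          ((hre.add him).const_mul _) (.of_forall hpt)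
    _ ≤ 2 ^ (p - 1) * (b + b) := by
        rw [integral_const_mul, integral_add hre him]
        gcongr
        exacts [hpart _ fun i ↦ Complex.abs_re_le_norm _, hpart _ fun i ↦ Complex.abs_im_le_norm _]
    _ = 2 ^ p * (∑ i ∈ F, ‖c i‖ ^ 2) ^ p * R (2 * p) := by
        rw [← two_mul, ← mul_assoc, ← pow_succ, Nat.sub_add_cancel hp, mul_assoc]

end ComplexCoefficients

theorem two_pow_mul_rpow_le {B α : ℝ} (hB : 0 ≤ B) (hα : 1 ≤ α) (p : ℕ) :
    2 ^ p * (B * ((2 * p : ℕ) : ℝ)) ^ (α * ((2 * p : ℕ) : ℝ)) ≤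
      (4 * B * p) ^ (α * ((2 * p : ℕ) : ℝ)) := by
  have hp : (p : ℝ) ≤ α * ((2 * p : ℕ) : ℝ) := by push_cast; nlinarith [p.cast_nonneg (α := ℝ)]
  calc 2 ^ p * (B * ((2 * p : ℕ) : ℝ)) ^ (α * ((2 * p : ℕ) : ℝ))
      ≤ 2 ^ (α * ((2 * p : ℕ) : ℝ)) * (B * ((2 * p : ℕ) : ℝ)) ^ (α * ((2 * p : ℕ) : ℝ)) := by
        gcongr
        exact (rpow_natCast (2 : ℝ) p).symm.trans_le (rpow_le_rpow_of_exponent_le one_le_two hp)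
    _ = (4 * B * p) ^ (α * ((2 * p : ℕ) : ℝ)) := by
        rw [← mul_rpow zero_le_two (by positivity)]
        push_cast
        ring_nf

/-- Moment bound for linear combinations with complex coefficients of independent
centered random variables with a common stretched-exponential tail bound of exponent
`γ ∈ (0,1]`: `E[|∑ cₙ gₙ|^{2p}] ≤ (Cp)^{2p(2γ+3)/(3γ)} (∑ |cₙ|²)^p`. -/
theorem stmt_16 (C₀ c₀ γ : ℝ) (hC₀ : 0 < C₀) (hc₀ : 0 < c₀) (hγ0 : 0 < γ) (hγ1 : γ ≤ 1) :
    ∃ C : ℝ, 0 < C ∧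
      ∀ (Ω : Type) (_ : MeasurableSpace Ω) (μ : Measure Ω), IsProbabilityMeasure μ →
        ∀ g : ℕ → Ω → ℝ, (∀ n, Measurable (g n)) →
          iIndepFun g μ →
          (∀ n, Integrable (g n) μ) → (∀ n, (∫ ω, g n ω ∂μ) = 0) →
          (∀ n, ∀ ρ : ℝ, 0 ≤ ρ →
            μ {ω | ρ ≤ |g n ω|} ≤ ENNReal.ofReal (C₀ * Real.exp (-c₀ * ρ ^ γ))) →
          ∀ (p : ℕ), 1 ≤ p → ∀ (F : Finset ℕ) (cs : ℕ → ℂ),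
            ∫ ω, ‖∑ n ∈ F, cs n * (g n ω : ℂ)‖ ^ (2 * p) ∂μ ≤
              (C * p) ^ ((2 * (p : ℝ) * (2 * γ + 3)) / (3 * γ)) *
                (∑ n ∈ F, ‖cs n‖ ^ 2) ^ p := by
  set A := tailMomentConst C₀ c₀ γ
  have hA : 1 ≤ A := one_le_tailMomentConst hC₀.le hc₀ hγ0
  set B := 8 * exp 1 * A * (4 * A) ^ (3 / γ)
  have hB₁ : 1 ≤ 8 * exp 1 * A := by nlinarith [add_one_le_exp 1]
  have hB₂ : 1 ≤ (4 * A) ^ (3 / γ) := one_le_rpow (by linarith) (by positivity)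
  have hα : 1 ≤ 1 / γ + 2 / 3 := by have := (one_le_div hγ0).2 hγ1; linarith
  refine ⟨4 * B, by positivity, fun Ω _ μ _ g hmeas hindep _ hcent htail p hp F cs ↦ ?_⟩
  have hmoments := integral_norm_sum_mul_pow_le (R := fun m ↦ (B * m) ^ ((1 / γ + 2 / 3) * m))
    hindep hmeas (fun n ↦ integrable_pow_of_tail (hmeas n) hC₀.le hc₀ hγ0 hγ1 (htail n))
    hcent (fun n j _ ↦ abs_integral_pow_le_of_tail (hmeas n) hC₀.le hc₀ hγ0 hγ1 (htail n) j)
    (by simp) (fun m ↦ by positivity)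
    (fun m j hj hjm ↦ choose_mul_momentGrowth_mul_le hγ0 hγ1 hA
      (le_mul_of_one_le_right (by positivity) hB₂) (le_mul_of_one_le_left (by positivity) hB₁)
      hj hjm) cs F hp
  calc _ ≤ 2 ^ p * (∑ n ∈ F, ‖cs n‖ ^ 2) ^ p * (B * ((2 * p : ℕ) : ℝ)) ^
          ((1 / γ + 2 / 3) * ((2 * p : ℕ) : ℝ)) := hmoments
    _ ≤ (4 * B * p) ^ ((1 / γ + 2 / 3) * ((2 * p : ℕ) : ℝ)) * (∑ n ∈ F, ‖cs n‖ ^ 2) ^ p := by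
        rw [mul_right_comm]
        gcongr
        exact two_pow_mul_rpow_le (by positivity) hα p
    _ = _ := by
        congr 2
        push_cast
        field_simp
        ring
end
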